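/- arXiv:1312.2104 — 5 statements merged into one kernel-verified Lean document; each statement's English description precedes it below -/
import Mathlib

section
/- Let n ≥ 1, let Q ⊆ ℝ^n × ℝ be open, and let X₀ = (x₀,t₀) ∈ ∂Q \ closure(∂_p Q). Then there exists r > 0 such that B_r(x₀) × {t₀} ⊆ ∂Q \ closure(∂_p Q), B_r(x₀) × (t₀, t₀ + r²) ⊆ (ℝ^n × ℝ) \ closure(Q), and B_r(x₀) × (t₀ − r², t₀) ⊆ Q. -/
open MeasureTheory Real Set Metric Filter
open Topology

noncomputable section

/-- The space ℝ^n × ℝ (spatial × time). -/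
abbrev Spc (n : ℕ) := EuclideanSpace ℝ (Fin n) × ℝ

/-- Parabolic cylinder C_r(Y) = B_r(y) × (s - r², s). -/
def pCyl (n : ℕ) (Y : Spc n) (r : ℝ) : Set (Spc n) :=
  (Metric.ball Y.1 r) ×ˢ (Set.Ioo (Y.2 - r ^ 2) Y.2)

/-- |C_r|: the measure of a parabolic cylinder of radius r. -/
def cylVol (n : ℕ) (r : ℝ) : ENNReal :=
  volume (pCyl n ((0 : EuclideanSpace ℝ (Fin n)), (0 : ℝ)) r)

/-- The parabolic boundary of an open set Q. -/
def pBoundary (n : ℕ) (Q : Set (Spc n)) : Set (Spc n) :=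
  {X | X ∈ frontier Q ∧ ∃ δ > (0 : ℝ), ∃ γ : ℝ → EuclideanSpace ℝ (Fin n),
    ContinuousOn γ (Set.Ico X.2 (X.2 + δ)) ∧ γ X.2 = X.1 ∧
    ∀ t ∈ Set.Ioo X.2 (X.2 + δ), (γ t, t) ∈ Q}

/-- Condition (A): exterior measure condition. -/
def condA (n : ℕ) (Q : Set (Spc n)) (θ₀ : ℝ) : Prop :=
  ∀ X ∈ pBoundary n Q, ∀ r > (0 : ℝ),
    ENNReal.ofReal θ₀ * cylVol n r < volume (pCyl n X r \ Q)

/-- Parabolic distance. -/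
def pDist (n : ℕ) (X Y : Spc n) : ℝ := max ‖X.1 - Y.1‖ (Real.sqrt |X.2 - Y.2|)

/-- The fundamental solution of the heat equation. -/
def heatF (n : ℕ) (x : EuclideanSpace ℝ (Fin n)) (t : ℝ) : ℝ :=
  if 0 < t then (4 * π * t) ^ (-(n : ℝ) / 2) * Real.exp (-‖x‖ ^ 2 / (4 * t)) else 0

/-- Heat ball E(X, r). -/
def heatBall (n : ℕ) (X : Spc n) (r : ℝ) : Set (Spc n) :=
  {Y | r ≤ heatF n (X.1 - Y.1) (X.2 - Y.2)}

/-- Thermal capacity of a set. -/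
def thermalCap (n : ℕ) (K : Set (Spc n)) : ENNReal :=
  sSup {m : ENNReal | ∃ μ : Measure (Spc n), IsFiniteMeasure μ ∧ μ Kᶜ = 0 ∧
    (∀ X : Spc n, ∫⁻ Y, ENNReal.ofReal (heatF n (X.1 - Y.1) (X.2 - Y.2)) ∂μ ≤ 1) ∧
    m = μ Set.univ}

/-- Heat shell {Y : a ≤ F(Y₀ - Y) ≤ b}. -/
def heatShell (n : ℕ) (Y₀ : Spc n) (a b : ℝ) : Set (Spc n) :=
  {Y | a ≤ heatF n (Y₀.1 - Y.1) (Y₀.2 - Y.2) ∧ heatF n (Y₀.1 - Y.1) (Y₀.2 - Y.2) ≤ b}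

/-!
Membership in `Q` propagates backwards in time along any continuous path `t ↦ (γ t, t)`
avoiding the parabolic boundary: at the last exit time from `Q` the path would sit on
`∂Q` and enter `Q` immediately afterwards, i.e. it would hit `∂_p Q`. In a convex
neighbourhood of `X₀` avoiding `∂_p Q`, straight segments are such paths, so every point of
that neighbourhood earlier than a point of `Q` lies in `Q`. Since `X₀ ∈ ∂Q \ Q`, this
puts the part of the neighbourhood strictly before `t₀` inside `Q` and the part at or after
`t₀` outside `Q`.
-/

lemma ball_prod_Ioo_sq_subset_ball {α : Type*} [PseudoMetricSpace α] {x : α} {t r ε : ℝ}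
    (hr : r ≤ ε) (hr2 : r ^ 2 ≤ ε) :
    ball x r ×ˢ Ioo (t - r ^ 2) (t + r ^ 2) ⊆ ball (x, t) ε := by
  rw [← Real.ball_eq_Ioo, ← ball_prod_same]
  exact prod_mono (ball_subset_ball hr) (ball_subset_ball hr2)

section ParabolicBoundary

variable {n : ℕ} {Q : Set (Spc n)}

lemma mem_or_mem_pBoundary_of_forall_Ioo_mem {γ : ℝ → EuclideanSpace ℝ (Fin n)} {τ b : ℝ}
    (hτb : τ < b) (hγ : ContinuousOn γ (Ico τ b)) (hQ : ∀ t ∈ Ioo τ b, (γ t, t) ∈ Q) :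
    (γ τ, τ) ∈ Q ∨ (γ τ, τ) ∈ pBoundary n Q := by
  by_cases hτQ : (γ τ, τ) ∈ Q
  · exact Or.inl hτQ
  have hcont : ContinuousWithinAt (fun t => (γ t, t)) (Ioo τ b) τ :=
    ((hγ τ ⟨le_rfl, hτb⟩).prodMk continuousWithinAt_id).mono Ioo_subset_Ico_self
  have hτ : τ ∈ closure (Ioo τ b) := by
    rw [closure_Ioo hτb.ne]
    exact ⟨le_rfl, hτb.le⟩
  refine Or.inr ⟨⟨hcont.mem_closure hτ hQ, fun h => hτQ (interior_subset h)⟩,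
    b - τ, sub_pos.2 hτb, γ, ?_, rfl, ?_⟩ <;> rwa [add_sub_cancel]

lemma IsOpen.forall_Icc_mem_of_notMem_pBoundary (hQ : IsOpen Q)
    {γ : ℝ → EuclideanSpace ℝ (Fin n)} {a b : ℝ} (hγ : ContinuousOn γ (Icc a b))
    (havoid : ∀ t ∈ Icc a b, (γ t, t) ∉ pBoundary n Q) (hb : (γ b, b) ∈ Q) :
    ∀ t ∈ Icc a b, (γ t, t) ∈ Q := by
  by_contra! hexit
  set T := Icc a b ∩ (fun t => (γ t, t)) ⁻¹' Qᶜ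
  have hTne : T.Nonempty := hexit
  have hTbdd : BddAbove T := bddAbove_Icc.mono inter_subset_left
  have hTcl : IsClosed T :=
    (hγ.prodMk continuousOn_id).preimage_isClosed_of_isClosed isClosed_Icc hQ.isClosed_compl
  obtain ⟨hτab, hτQ⟩ : sSup T ∈ T := hTcl.csSup_mem hTne hTbdd
  have hτb : sSup T < b := hτab.2.lt_of_ne fun h => hτQ (h ▸ hb)
  have hafter : ∀ t ∈ Ioo (sSup T) b, (γ t, t) ∈ Q := fun t ht => by
    by_contra htQ
    exact (le_csSup hTbdd ⟨⟨hτab.1.trans ht.1.le, ht.2.le⟩, htQ⟩).not_gt ht.1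
  have hγ' : ContinuousOn γ (Ico (sSup T) b) :=
    hγ.mono fun t ht => ⟨hτab.1.trans ht.1, ht.2.le⟩
  exact (mem_or_mem_pBoundary_of_forall_Ioo_mem hτb hγ' hafter).elim hτQ (havoid _ hτab)

lemma Convex.mem_of_snd_lt_of_mem (hQ : IsOpen Q) {C : Set (Spc n)} (hC : Convex ℝ C)
    (hCp : Disjoint C (pBoundary n Q)) {X Y : Spc n} (hX : X ∈ C) (hY : Y ∈ C)
    (hlt : X.2 < Y.2) (hYQ : Y ∈ Q) : X ∈ Q := by
  set P : ℝ → Spc n := fun t => X + ((t - X.2) / (Y.2 - X.2)) • (Y - X)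
  have hP : ∀ t, ((P t).1, t) = P t := fun t => by
    ext
    · rfl
    · simp only [P, Prod.snd_add, Prod.smul_snd, Prod.snd_sub, smul_eq_mul]
      field_simp [(sub_pos.2 hlt).ne']
      ring
  have hPC : ∀ t ∈ Icc X.2 Y.2, P t ∈ C := fun t ht =>
    hC.add_smul_sub_mem hX hY
      ⟨div_nonneg (by linarith [ht.1]) (by linarith),
        (div_le_one (by linarith)).2 (by linarith [ht.2])⟩
  have hPY : P Y.2 = Y := by simp [P, div_self (sub_pos.2 hlt).ne']
  have hPX : P X.2 = X := by simp [P]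
  have hPQ := hQ.forall_Icc_mem_of_notMem_pBoundary (γ := fun t => (P t).1) (by fun_prop)
    (fun t ht => by rw [hP]; exact hCp.notMem_of_mem_left (hPC t ht))
    (by rwa [hP, hPY]) X.2 ⟨le_rfl, hlt.le⟩
  rwa [hP, hPX] at hPQ

lemma exists_gt_mk_mem_of_mem {α : Type*} [TopologicalSpace α] {U : Set (α × ℝ)}
    (hU : IsOpen U) {Y : α × ℝ} (hY : Y ∈ U) : ∃ s > Y.2, (Y.1, s) ∈ U := by
  have hnhds : ∀ᶠ s in 𝓝 Y.2, (Y.1, s) ∈ U :=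
    (hU.preimage (Continuous.prodMk_right Y.1)).mem_nhds hY
  exact ((hnhds.filter_mono nhdsWithin_le_nhds).and
    (self_mem_nhdsWithin : Ioi Y.2 ∈ 𝓝[>] Y.2)).exists.imp
    fun s hs => ⟨hs.2, hs.1⟩

variable {C : Set (Spc n)} {X₀ Y : Spc n}

lemma Convex.notMem_of_snd_le (hQ : IsOpen Q) (hCo : IsOpen C) (hC : Convex ℝ C)
    (hCp : Disjoint C (pBoundary n Q)) (hX₀ : X₀ ∈ C) (hX₀Q : X₀ ∉ Q) (hY : Y ∈ C)
    (hle : X₀.2 ≤ Y.2) : Y ∉ Q := fun hYQ => by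
  obtain ⟨s, hs, hsCQ⟩ := exists_gt_mk_mem_of_mem (hCo.inter hQ) ⟨hY, hYQ⟩
  exact hX₀Q (hC.mem_of_snd_lt_of_mem hQ hCp hX₀ hsCQ.1 (hle.trans_lt hs) hsCQ.2)

lemma Convex.mem_of_snd_lt (hQ : IsOpen Q) (hCo : IsOpen C) (hC : Convex ℝ C)
    (hCp : Disjoint C (pBoundary n Q)) (hX₀ : X₀ ∈ C) (hX₀Q : X₀ ∈ closure Q) (hY : Y ∈ C)
    (hlt : Y.2 < X₀.2) : Y ∈ Q := by
  have hV : IsOpen (C ∩ {Z | Y.2 < Z.2}) := hCo.inter (isOpen_lt continuous_const continuous_snd)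
  obtain ⟨Z, ⟨hZC, hYZ⟩, hZQ⟩ := mem_closure_iff.1 hX₀Q _ hV ⟨hX₀, hlt⟩
  exact hC.mem_of_snd_lt_of_mem hQ hCp hY hZC hYZ hZQ

lemma Convex.mem_closure_of_snd_le (hQ : IsOpen Q) (hCo : IsOpen C) (hC : Convex ℝ C)
    (hCp : Disjoint C (pBoundary n Q)) (hX₀ : X₀ ∈ C) (hX₀Q : X₀ ∈ closure Q) (hY : Y ∈ C)
    (hle : Y.2 ≤ X₀.2) : Y ∈ closure Q := by
  have hvert : Continuous fun s : ℝ => (Y.1, s) := Continuous.prodMk_right Y.1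
  have hnear : ∀ᶠ s in 𝓝[<] Y.2, (Y.1, s) ∈ C :=
    nhdsWithin_le_nhds ((hCo.preimage hvert).mem_nhds hY)
  refine mem_closure_of_tendsto
    ((hvert.tendsto' Y.2 Y rfl).mono_left (nhdsWithin_le_nhds (s := Iio Y.2))) ?_
  filter_upwards [hnear, (self_mem_nhdsWithin : Iio Y.2 ∈ 𝓝[<] Y.2)] with s hsC hs
  exact hC.mem_of_snd_lt hQ hCo hCp hX₀ hX₀Q hsC (lt_of_lt_of_le hs hle)

end ParabolicBoundary

theorem frontier_minus_parabolic_boundary_flat_general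
    (n : ℕ) (Q : Set (Spc n)) (hQ : IsOpen Q)
    (x₀ : EuclideanSpace ℝ (Fin n)) (t₀ : ℝ)
    (hX : (x₀, t₀) ∈ frontier Q \ closure (pBoundary n Q)) :
    ∃ r > (0 : ℝ),
      (Metric.ball x₀ r) ×ˢ ({t₀} : Set ℝ) ⊆ frontier Q \ closure (pBoundary n Q) ∧
      (Metric.ball x₀ r) ×ˢ (Set.Ioo t₀ (t₀ + r ^ 2)) ⊆ (closure Q)ᶜ ∧
      (Metric.ball x₀ r) ×ˢ (Set.Ioo (t₀ - r ^ 2) t₀) ⊆ Q := by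
  obtain ⟨hXcl, hXQ⟩ : (x₀, t₀) ∈ closure Q \ Q := hQ.frontier_eq ▸ hX.1
  obtain ⟨ε, hε, hCcl⟩ := Metric.isOpen_iff.1 isClosed_closure.isOpen_compl _ hX.2
  set C := ball (x₀, t₀) ε
  have hCp : Disjoint C (pBoundary n Q) :=
    (subset_compl_iff_disjoint_right.1 hCcl).mono_right subset_closure
  have hC := convex_ball (x₀, t₀) ε
  have hX₀ : (x₀, t₀) ∈ C := mem_ball_self hε
  set r := min ε 1
  have hr : 0 < r := lt_min hε one_pos
  have hbox : ball x₀ r ×ˢ Ioo (t₀ - r ^ 2) (t₀ + r ^ 2) ⊆ C :=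
    ball_prod_Ioo_sq_subset_ball (min_le_left _ _)
      ((pow_le_of_le_one hr.le (min_le_right _ _) two_ne_zero).trans (min_le_left _ _))
  have hr2 : 0 < r ^ 2 := by positivity
  refine ⟨r, hr, ?_, ?_, ?_⟩
  · rintro ⟨y, s⟩ ⟨hy, hs : s = t₀⟩
    have hyC : (y, s) ∈ C := hbox ⟨hy, by constructor <;> linarith⟩
    refine ⟨hQ.frontier_eq ▸ ⟨?_, ?_⟩, hCcl hyC⟩
    · exact hC.mem_closure_of_snd_le hQ isOpen_ball hCp hX₀ hXcl hyC hs.le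
    · exact hC.notMem_of_snd_le hQ isOpen_ball hCp hX₀ hXQ hyC hs.ge
  · have hV : IsOpen (C ∩ {Z | t₀ < Z.2}) :=
      isOpen_ball.inter (isOpen_lt continuous_const continuous_snd)
    have hVQ : Disjoint (C ∩ {Z | t₀ < Z.2}) Q := disjoint_left.2 fun Z hZ =>
      hC.notMem_of_snd_le hQ isOpen_ball hCp hX₀ hXQ hZ.1 (le_of_lt hZ.2)
    rintro Y ⟨hy, hs⟩
    exact (hVQ.closure_right hV).notMem_of_mem_left
      ⟨hbox ⟨hy, by constructor <;> linarith [hs.1, hs.2]⟩, hs.1⟩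
  · rintro Y ⟨hy, hs⟩
    exact hC.mem_of_snd_lt hQ isOpen_ball hCp hX₀ hXcl
      (hbox ⟨hy, by constructor <;> linarith [hs.1, hs.2]⟩) hs.2

/-- Near a point of `∂Q \ closure(∂_p Q)` the boundary is locally flat. -/
theorem frontier_minus_parabolic_boundary_flat
    (n : ℕ) (hn : 1 ≤ n) (Q : Set (Spc n)) (hQ : IsOpen Q)
    (x₀ : EuclideanSpace ℝ (Fin n)) (t₀ : ℝ)
    (hX : (x₀, t₀) ∈ frontier Q \ closure (pBoundary n Q)) :
    ∃ r > (0 : ℝ),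
      (Metric.ball x₀ r) ×ˢ ({t₀} : Set ℝ) ⊆ frontier Q \ closure (pBoundary n Q) ∧
      (Metric.ball x₀ r) ×ˢ (Set.Ioo t₀ (t₀ + r ^ 2)) ⊆ (closure Q)ᶜ ∧
      (Metric.ball x₀ r) ×ˢ (Set.Ioo (t₀ - r ^ 2) t₀) ⊆ Q :=
  frontier_minus_parabolic_boundary_flat_general n Q hQ x₀ t₀ hX
end
end

section
/- Let n ≥ 1 and let Q ⊆ ℝ^n × ℝ be an open set satisfying condition (A) with constant θ₀ ∈ (0,1), and assume ∂_p Q ≠ ∅. Let X ∈ Q and set ρ := inf{|X−Y| : Y ∈ ∂_p Q}, the parabolic distance from X to ∂_p Q. Then for every r ≥ 4ρ/θ₀ one has |C_r(X) \ Q| > θ₀ · 2^{−n−2} · |C_r|. -/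
open MeasureTheory Real Set Metric Filter

noncomputable section

/-!
Pick a point `Y ∈ ∂_p Q` with `|X - Y|² ≤ θ₀ r² / 16`, possible because `ρ ≤ θ₀ r / 4` and
`θ₀ < 1`. The cylinder `C_{3r/4}(Y)` then lies in `C_r(X)` except for the slab
`B_{3r/4}(y) × [t, s)` of height at most `|X - Y|²`, so condition (A) at `Y` gives
`θ₀ |C_{3r/4}| < |C_r(X) \ Q| + |slab|`, and the slab costs less than
`θ₀ (|C_{3r/4}| - 2^{-n-2} |C_r|)`.
-/

lemma pDist_nonneg (n : ℕ) (X Y : Spc n) : 0 ≤ pDist n X Y :=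
  (norm_nonneg _).trans (le_max_left _ _)

lemma norm_sub_le_pDist (n : ℕ) (X Y : Spc n) : ‖X.1 - Y.1‖ ≤ pDist n X Y :=
  le_max_left _ _

lemma abs_sub_le_pDist_sq (n : ℕ) (X Y : Spc n) : |X.2 - Y.2| ≤ pDist n X Y ^ 2 := by
  have h : √|X.2 - Y.2| ≤ pDist n X Y := le_max_right _ _
  calc |X.2 - Y.2| = √|X.2 - Y.2| ^ 2 := (sq_sqrt (abs_nonneg _)).symm
    _ ≤ pDist n X Y ^ 2 := pow_le_pow_left₀ (sqrt_nonneg _) h 2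

lemma exists_pos_le_pDist_of_isOpen {n : ℕ} {Q : Set (Spc n)} (hQ : IsOpen Q) {X : Spc n}
    (hX : X ∈ Q) : ∃ η > 0, ∀ Y ∉ Q, η ≤ pDist n X Y := by
  obtain ⟨ε, hε, hball⟩ := Metric.isOpen_iff.mp hQ X hX
  refine ⟨min ε 1, lt_min hε one_pos, fun Y hY => ?_⟩
  by_contra! hlt
  have hx : ‖X.1 - Y.1‖ < min ε 1 := (norm_sub_le_pDist n X Y).trans_lt hlt
  -- `|Δt| ≤ |X - Y|² < min ε 1 ^ 2 ≤ min ε 1`, since `min ε 1 ≤ 1`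
  have ht : |X.2 - Y.2| < min ε 1 := by
    have h2 := (abs_sub_le_pDist_sq n X Y).trans_lt
      (pow_lt_pow_left₀ hlt (pDist_nonneg n X Y) two_ne_zero)
    nlinarith [min_le_right ε 1, lt_min hε one_pos]
  refine hY (hball ?_)
  rw [mem_ball, Prod.dist_eq, dist_comm Y.1, dist_comm Y.2, dist_eq_norm, Real.dist_eq]
  exact max_lt (hx.trans_le (min_le_left _ _)) (ht.trans_le (min_le_left _ _))

lemma pBoundary_subset_compl {n : ℕ} {Q : Set (Spc n)} (hQ : IsOpen Q) :
    pBoundary n Q ⊆ Qᶜ := fun _ hY =>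
  disjoint_left.mp (disjoint_frontier_iff_isOpen.mpr hQ) hY.1

lemma sInf_pDist_pBoundary_pos {n : ℕ} {Q : Set (Spc n)} (hQ : IsOpen Q)
    (hne : (pBoundary n Q).Nonempty) {X : Spc n} (hX : X ∈ Q) :
    0 < sInf (pDist n X '' pBoundary n Q) := by
  obtain ⟨η, hη, hle⟩ := exists_pos_le_pDist_of_isOpen hQ hX
  refine hη.trans_le (le_csInf (hne.image _) ?_)
  rintro _ ⟨Y, hY, rfl⟩
  exact hle Y (pBoundary_subset_compl hQ hY)

lemma volume_ball_prod {n : ℕ} (y : EuclideanSpace ℝ (Fin n)) {R : ℝ} (hR : 0 < R)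
    (s : Set ℝ) :
    volume (ball y R ×ˢ s) =
      ENNReal.ofReal (R ^ n) * volume (ball (0 : EuclideanSpace ℝ (Fin n)) 1) * volume s := by
  rw [Measure.volume_eq_prod, Measure.prod_prod, Measure.addHaar_ball_of_pos _ _ hR,
    finrank_euclideanSpace_fin]

lemma volume_pCyl {n : ℕ} (Y : Spc n) {r : ℝ} (hr : 0 < r) :
    volume (pCyl n Y r) =
      ENNReal.ofReal (r ^ n * r ^ 2) * volume (ball (0 : EuclideanSpace ℝ (Fin n)) 1) := by
  rw [pCyl, volume_ball_prod _ hr, Real.volume_Ioo, sub_sub_cancel,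
    ENNReal.ofReal_mul (by positivity)]
  ring

lemma cylVol_eq {n : ℕ} {r : ℝ} (hr : 0 < r) :
    cylVol n r =
      ENNReal.ofReal (r ^ n * r ^ 2) * volume (ball (0 : EuclideanSpace ℝ (Fin n)) 1) :=
  volume_pCyl _ hr

lemma pCyl_subset_union_slab {n : ℕ} {X Y : Spc n} {r R : ℝ}
    (hx : ‖X.1 - Y.1‖ + R ≤ r) (ht : X.2 - r ^ 2 ≤ Y.2 - R ^ 2) :
    pCyl n Y R ⊆ pCyl n X r ∪ ball Y.1 R ×ˢ Ico X.2 Y.2 := by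
  rintro ⟨z, τ⟩ ⟨hz, hτ₁, hτ₂⟩
  rcases lt_or_ge τ X.2 with hτ | hτ
  · refine Or.inl ⟨?_, by linarith, hτ⟩
    rw [mem_ball] at hz ⊢
    calc dist z X.1 ≤ dist z Y.1 + ‖X.1 - Y.1‖ := by
          rw [← dist_eq_norm, dist_comm X.1]; exact dist_triangle _ _ _
      _ < r := by linarith
  · exact Or.inr ⟨hz, hτ, hτ₂⟩

lemma two_zpow_cyl_add_slab_le {n : ℕ} {θ r a : ℝ} (hθ : 0 < θ) (hr : 0 < r)
    (ha : a ≤ θ * r ^ 2 / 16) :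
    θ * (2 : ℝ) ^ (-(n : ℤ) - 2) * (r ^ n * r ^ 2) + (3 / 4 * r) ^ n * a ≤
      θ * ((3 / 4 * r) ^ n * (3 / 4 * r) ^ 2) := by
  have h2 : (2 : ℝ) ^ (-(n : ℤ) - 2) = (1 / 2) ^ n / 4 := by
    rw [show -(n : ℤ) - 2 = -((n + 2 : ℕ) : ℤ) by push_cast; ring, zpow_neg, zpow_natCast,
      pow_add, one_div, inv_pow]
    ring
  have hhalf : (1 / 2 : ℝ) ^ n ≤ (3 / 4) ^ n := pow_le_pow_left₀ (by norm_num) (by norm_num) n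
  rw [h2, mul_pow, mul_pow]
  nlinarith [mul_le_mul_of_nonneg_left ha (by positivity : (0 : ℝ) ≤ (3 / 4) ^ n * r ^ n),
    mul_le_mul_of_nonneg_left hhalf (by positivity : (0 : ℝ) ≤ θ * r ^ n * r ^ 2),
    (by positivity : (0 : ℝ) ≤ θ * (3 / 4) ^ n * r ^ n * r ^ 2)]

lemma lt_volume_pCyl_diff_of_pDist_sq_le {n : ℕ} {Q : Set (Spc n)} {θ₀ : ℝ}
    (hθ₀ : θ₀ ∈ Ioc (0 : ℝ) 1) (hA : condA n Q θ₀) {X Y : Spc n} (hY : Y ∈ pBoundary n Q)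
    {r : ℝ} (hr : 0 < r) (hXY : pDist n X Y ^ 2 ≤ θ₀ * r ^ 2 / 16) :
    ENNReal.ofReal (θ₀ * (2 : ℝ) ^ (-(n : ℤ) - 2)) * cylVol n r <
      volume (pCyl n X r \ Q) := by
  obtain ⟨hθ, hθ1⟩ := hθ₀
  set R := 3 / 4 * r with hR
  set a := pDist n X Y ^ 2
  set ω := volume (ball (0 : EuclideanSpace ℝ (Fin n)) 1)
  have hRpos : 0 < R := by positivity
  have ha : a ≤ r ^ 2 / 16 := hXY.trans (by nlinarith)
  have hdx : ‖X.1 - Y.1‖ ≤ r / 4 :=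
    (norm_sub_le_pDist n X Y).trans (abs_le_of_sq_le_sq' (by linarith) (by positivity)).2
  have hdt : |X.2 - Y.2| ≤ a := abs_sub_le_pDist_sq n X Y
  have hslab : volume (ball Y.1 R ×ˢ Ico X.2 Y.2) ≤ ENNReal.ofReal (R ^ n * a) * ω := by
    rw [volume_ball_prod _ hRpos, Real.volume_Ico, ENNReal.ofReal_mul (by positivity),
      mul_right_comm _ (ENNReal.ofReal a)]
    gcongr
    linarith [(abs_le.mp hdt).1]
  have hcover : pCyl n Y R \ Q ⊆ (pCyl n X r \ Q) ∪ ball Y.1 R ×ˢ Ico X.2 Y.2 := by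
    refine fun Z hZ => (pCyl_subset_union_slab (by linarith) ?_ hZ.1).imp (⟨·, hZ.2⟩) id
    nlinarith [(abs_le.mp hdt).2]
  have hbudget : ENNReal.ofReal (θ₀ * (2 : ℝ) ^ (-(n : ℤ) - 2)) * cylVol n r +
      ENNReal.ofReal (R ^ n * a) * ω ≤ ENNReal.ofReal θ₀ * cylVol n R := by
    rw [cylVol_eq hr, cylVol_eq hRpos, ← mul_assoc, ← mul_assoc, ← add_mul,
      ← ENNReal.ofReal_mul (by positivity), ← ENNReal.ofReal_mul hθ.le,
      ← ENNReal.ofReal_add (by positivity) (by positivity)]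
    gcongr
    exact two_zpow_cyl_add_slab_le hθ hr hXY
  have hfin : ENNReal.ofReal (R ^ n * a) * ω ≠ ⊤ :=
    ENNReal.mul_ne_top ENNReal.ofReal_ne_top measure_ball_lt_top.ne
  refine (ENNReal.add_lt_add_iff_right hfin).mp ?_
  calc _ ≤ ENNReal.ofReal θ₀ * cylVol n R := hbudget
    _ < volume (pCyl n Y R \ Q) := hA Y hY R hRpos
    _ ≤ volume (pCyl n X r \ Q) + volume (ball Y.1 R ×ˢ Ico X.2 Y.2) :=
      (measure_mono hcover).trans (measure_union_le _ _)
    _ ≤ _ := by gcongr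

theorem condA_interior_measure_general
    (n : ℕ) (Q : Set (Spc n)) (hQ : IsOpen Q)
    (θ₀ : ℝ) (hθ₀ : θ₀ ∈ Set.Ioo (0 : ℝ) 1) (hA : condA n Q θ₀)
    (hne : (pBoundary n Q).Nonempty)
    (X : Spc n) (hX : X ∈ Q)
    (ρ : ℝ) (hρ : ρ = sInf (pDist n X '' pBoundary n Q)) :
    ∀ r : ℝ, 4 * ρ / θ₀ ≤ r →
      ENNReal.ofReal (θ₀ * (2 : ℝ) ^ (-(n : ℤ) - 2)) * cylVol n r <
        volume (pCyl n X r \ Q) := by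
  obtain ⟨hθ, hθ1⟩ := hθ₀
  intro r hr
  have hρ_pos : 0 < ρ := hρ ▸ sInf_pDist_pBoundary_pos hQ hne hX
  have hr_pos : 0 < r := (by positivity : 0 < 4 * ρ / θ₀).trans_le hr
  have hρ_le : ρ ≤ θ₀ * r / 4 := by rw [div_le_iff₀ hθ] at hr; linarith
  have hlt : sInf (pDist n X '' pBoundary n Q) < √θ₀ * r / 4 := by
    have : θ₀ < √θ₀ := (lt_sqrt hθ.le).mpr (by nlinarith)
    rw [← hρ]; nlinarith
  obtain ⟨_, ⟨Y, hY, rfl⟩, hXY⟩ := exists_lt_of_csInf_lt (hne.image _) hlt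
  refine lt_volume_pCyl_diff_of_pDist_sq_le ⟨hθ, hθ1.le⟩ hA hY hr_pos ?_
  calc pDist n X Y ^ 2 ≤ (√θ₀ * r / 4) ^ 2 :=
        pow_le_pow_left₀ (pDist_nonneg n X Y) hXY.le 2
    _ = θ₀ * r ^ 2 / 16 := by rw [div_pow, mul_pow, sq_sqrt hθ.le]; ring

/-- interior measure condition for large radii. -/
theorem condA_interior_measure
    (n : ℕ) (hn : 1 ≤ n) (Q : Set (Spc n)) (hQ : IsOpen Q)
    (θ₀ : ℝ) (hθ₀ : θ₀ ∈ Set.Ioo (0 : ℝ) 1) (hA : condA n Q θ₀)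
    (hne : (pBoundary n Q).Nonempty)
    (X : Spc n) (hX : X ∈ Q)
    (ρ : ℝ) (hρ : ρ = sInf (pDist n X '' pBoundary n Q)) :
    ∀ r : ℝ, 4 * ρ / θ₀ ≤ r →
      ENNReal.ofReal (θ₀ * (2 : ℝ) ^ (-(n : ℤ) - 2)) * cylVol n r <
        volume (pCyl n X r \ Q) :=
  condA_interior_measure_general n Q hQ θ₀ hθ₀ hA hne X hX ρ hρ

end
end

section
/- Let n ≥ 1. There exist ε > 0 and a function Φ : B_ε(0) ⊆ ℝ^n → ℝ of class C² with Φ(0) = 0, ∇Φ(0) = 0, D²Φ(0) = 0 and Φ ≤ 0, such that for every (x,t) with |x| < ε and −ε² < t < 0 one has: (x,t) ∈ E(1) if and only if t ≤ Φ(x). That is, in a neighborhood of the origin the boundary of the heat ball E(1) is the graph t = Φ(x) of a C² function whose value, gradient and Hessian all vanish at 0. -/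
/-!
For `t = -τ < 0`, `(x, t) ∈ E(1)` iff `‖x‖² ≤ g(τ) := -2nτ log(4πτ)`. On `[0, τ₁]`,
`τ₁ = 1/(4πe²)`, we have `g' ≥ 2n`, so `g` is an increasing bijection onto `[0, g(τ₁)]` and the
boundary of `E(1)` is the graph `t = -h(‖x‖²)` of its inverse `h`. As `s → 0⁺`, `g'(h(s)) → ∞`,
so `h'(s) = 1/g'(h(s)) → 0`, and `s h''(s) = 2n h'(s)² + 4n² h'(s)³ → 0`. These two limits are
exactly what makes a radial function `ψ(‖x‖²)` of class `C²` at the origin, with first derivative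
`0` and Hessian `2ψ'(0)⟪·, ·⟫ = 0` there.
-/

open MeasureTheory Real Set Metric Filter

noncomputable section

open Topology

section Calculus

variable {𝕜 : Type*} [NontriviallyNormedField 𝕜] {V W : Type*} [NormedAddCommGroup V]
  [NormedSpace 𝕜 V] [NormedAddCommGroup W] [NormedSpace 𝕜 W] {f : V → W} {f' : V → V →L[𝕜] W}
  {U : Set V} {x : V}

lemma contDiffOn_succ_of_hasFDerivAt {k : ℕ} (hU : IsOpen U)
    (hf : ∀ x ∈ U, HasFDerivAt f (f' x) x) (hf' : ContDiffOn 𝕜 k f' U) :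
    ContDiffOn 𝕜 (k + 1) f U := by
  rw [contDiffOn_succ_iff_fderiv_of_isOpen hU]
  exact ⟨fun x hx => (hf x hx).differentiableAt.differentiableWithinAt, by simp,
    hf'.congr fun x hx => (hf x hx).fderiv⟩

lemma iteratedFDerivWithin_one_eq_zero (hU : IsOpen U) (hx : x ∈ U)
    (h : HasFDerivAt f (0 : V →L[𝕜] W) x) : iteratedFDerivWithin 𝕜 1 f U x = 0 := by
  rw [iteratedFDerivWithin_of_isOpen 1 hU hx, ← norm_eq_zero, norm_iteratedFDeriv_one, h.fderiv,
    norm_zero]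

lemma iteratedFDerivWithin_two_eq_zero (hU : IsOpen U) (hx : x ∈ U)
    (hf : ∀ y ∈ U, HasFDerivAt f (f' y) y) (h : HasFDerivAt f' (0 : V →L[𝕜] V →L[𝕜] W) x) :
    iteratedFDerivWithin 𝕜 2 f U x = 0 := by
  have hf' : fderiv 𝕜 f =ᶠ[𝓝 x] f' :=
    eventually_of_mem (hU.mem_nhds hx) fun y hy => (hf y hy).fderiv
  ext m
  rw [iteratedFDerivWithin_of_isOpen 2 hU hx, iteratedFDeriv_two_apply, hf'.fderiv_eq, h.fderiv]
  simp

lemma hasFDerivAt_smul_apply_zero {c : V → 𝕜} (hc : ContinuousAt c 0) (L : V →L[𝕜] W) :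
    HasFDerivAt (fun y => c y • L y) (c 0 • L) 0 := by
  rw [hasFDerivAt_iff_isLittleO_nhds_zero]
  have hc₀ : (fun y => c y - c 0) =o[𝓝 0] fun _ => (1 : 𝕜) :=
    (Asymptotics.isLittleO_one_iff 𝕜).2 (by simpa using hc.sub_const (c 0))
  simpa [sub_smul] using hc₀.smul_isBigO (L.isBigO_id (𝓝 0))

end Calculus

lemma tendsto_norm_sq_nhdsGE_zero {V : Type*} [SeminormedAddCommGroup V] :
    Tendsto (fun y : V => ‖y‖ ^ 2) (𝓝 0) (𝓝[≥] 0) :=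
  tendsto_nhdsWithin_iff.2
    ⟨(by fun_prop : Continuous fun y : V => ‖y‖ ^ 2).tendsto' 0 0 (by simp),
      .of_forall fun y => sq_nonneg ‖y‖⟩

lemma continuousAt_comp_norm_sq_zero {V : Type*} [SeminormedAddCommGroup V] {φ : ℝ → ℝ}
    (hφ : Tendsto φ (𝓝[>] 0) (𝓝 (φ 0))) : ContinuousAt (fun y : V => φ (‖y‖ ^ 2)) 0 := by
  rw [ContinuousAt, norm_zero, zero_pow two_ne_zero]
  exact (continuousWithinAt_Ioi_iff_Ici.1 hφ).tendsto.comp tendsto_norm_sq_nhdsGE_zero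

section Radial

variable {E : Type*} [NormedAddCommGroup E] [InnerProductSpace ℝ E] {ψ ψ' ψ'' : ℝ → ℝ} {a : ℝ}

-- `innerSL ℝ`, retyped from `E →L⋆[ℝ] E →L[ℝ] ℝ` so that it can be added to `ℝ`-bilinear maps.
def innerBilin : E →L[ℝ] E →L[ℝ] ℝ := innerSL ℝ

-- Instance search does not find this one.
instance : ContinuousAdd (E →L[ℝ] E →L[ℝ] ℝ) :=
  ContinuousLinearMap.topologicalAddGroup.toContinuousAdd

@[simp] lemma innerBilin_apply (u v : E) : innerBilin u v = inner ℝ u v := rfl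

@[simp] lemma norm_innerBilin_apply (u : E) : ‖innerBilin u‖ = ‖u‖ := innerSL_apply_norm ℝ u

def radialDeriv (ψ' : ℝ → ℝ) (x : E) : E →L[ℝ] ℝ := (2 * ψ' (‖x‖ ^ 2)) • innerBilin x

def radialHessian (ψ' ψ'' : ℝ → ℝ) (x : E) : E →L[ℝ] E →L[ℝ] ℝ :=
  (2 * ψ' (‖x‖ ^ 2)) • innerBilin + (4 * ψ'' (‖x‖ ^ 2)) • (innerBilin x).smulRight (innerBilin x)

lemma radialHessian_zero_eq_zero (hψ'₀ : ψ' 0 = 0) : radialHessian ψ' ψ'' (0 : E) = 0 := by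
  ext u v
  simp [radialHessian, hψ'₀]

lemma hasFDerivAt_comp_norm_sq (hψ : ∀ s ∈ Ico 0 a, HasDerivWithinAt ψ (ψ' s) (Ici 0) s) {x : E}
    (hx : ‖x‖ ^ 2 < a) : HasFDerivAt (fun y => ψ (‖y‖ ^ 2)) (radialDeriv ψ' x) x := by
  refine ((hψ _ ⟨sq_nonneg _, hx⟩).comp_hasFDerivAt x (hasStrictFDerivAt_norm_sq x).hasFDerivAt
    (.of_forall fun y => sq_nonneg ‖y‖)).congr_fderiv ?_
  ext v
  simp [radialDeriv]
  ring

lemma hasFDerivAt_radialDeriv_of_ne (hψ' : ∀ s ∈ Ioo 0 a, HasDerivAt ψ' (ψ'' s) s)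
    {x : E} (hx : ‖x‖ ^ 2 < a) (hx₀ : x ≠ 0) :
    HasFDerivAt (radialDeriv ψ') (radialHessian ψ' ψ'' x) x := by
  have hc := ((hψ' _ ⟨by positivity, hx⟩).comp_hasFDerivAt x
      (hasStrictFDerivAt_norm_sq x).hasFDerivAt).const_mul 2
  refine (hc.smul innerBilin.hasFDerivAt).congr_fderiv ?_
  ext u w
  simp [radialHessian]
  ring

lemma hasFDerivAt_radialDeriv (hψ' : ∀ s ∈ Ioo 0 a, HasDerivAt ψ' (ψ'' s) s)
    (hψ'₀ : Tendsto ψ' (𝓝[>] 0) (𝓝 (ψ' 0))) {x : E} (hx : ‖x‖ ^ 2 < a) :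
    HasFDerivAt (radialDeriv ψ') (radialHessian ψ' ψ'' x) x := by
  rcases eq_or_ne x 0 with rfl | hx₀
  · refine (hasFDerivAt_smul_apply_zero ((continuousAt_comp_norm_sq_zero hψ'₀).const_mul 2)
      innerBilin).congr_fderiv ?_
    ext u v
    simp [radialHessian]
  · exact hasFDerivAt_radialDeriv_of_ne hψ' hx hx₀

lemma continuous_innerBilin_smulRight :
    Continuous fun x : E => (innerBilin x).smulRight (innerBilin x) :=
  show Continuous fun x : E =>
    ContinuousLinearMap.smulRightL ℝ E (E →L[ℝ] ℝ) (innerBilin x) (innerBilin x) by fun_prop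

lemma continuousAt_radialHessian_zero (hψ'₀ : Tendsto ψ' (𝓝[>] 0) (𝓝 (ψ' 0)))
    (hψ''₀ : Tendsto (fun s => s * ψ'' s) (𝓝[>] 0) (𝓝 0)) :
    ContinuousAt (radialHessian ψ' ψ'') (0 : E) := by
  have h₁ : ContinuousAt (fun y : E => (2 * ψ' (‖y‖ ^ 2)) • (innerBilin : E →L[ℝ] _)) 0 :=
    ((continuousAt_comp_norm_sq_zero hψ'₀).const_mul 2).smul continuousAt_const
  have h₂ : Tendsto (fun y : E => (4 * ψ'' (‖y‖ ^ 2)) • (innerBilin y).smulRight (innerBilin y))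
      (𝓝 0) (𝓝 0) := by
    have hs : ContinuousAt (fun y : E => ‖y‖ ^ 2 * ψ'' (‖y‖ ^ 2)) 0 :=
      continuousAt_comp_norm_sq_zero (φ := fun s => s * ψ'' s) (by simpa using hψ''₀)
    refine squeeze_zero_norm (E := E →L[ℝ] E →L[ℝ] ℝ)
      (a := fun y : E => 4 * ‖‖y‖ ^ 2 * ψ'' (‖y‖ ^ 2)‖) (fun y => ?_)
      (by simpa using hs.tendsto.norm.const_mul 4)
    refine (ContinuousLinearMap.opNorm_smul_le _ _).trans_eq ?_
    rw [ContinuousLinearMap.norm_smulRight_apply]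
    simp only [norm_innerBilin_apply, norm_mul, Real.norm_eq_abs, abs_pow, abs_norm]
    ring
  rw [ContinuousAt]
  convert h₁.tendsto.add h₂ using 2
  · rfl
  · ext u v
    simp [radialHessian]

lemma continuousOn_radialHessian (hψ' : ∀ s ∈ Ioo 0 a, HasDerivAt ψ' (ψ'' s) s)
    (hψ'' : ContinuousOn ψ'' (Ioo 0 a)) (hψ'₀ : Tendsto ψ' (𝓝[>] 0) (𝓝 (ψ' 0)))
    (hψ''₀ : Tendsto (fun s => s * ψ'' s) (𝓝[>] 0) (𝓝 0)) :
    ContinuousOn (radialHessian ψ' ψ'') {x : E | ‖x‖ ^ 2 < a} := by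
  intro x hx
  refine ContinuousAt.continuousWithinAt ?_
  rcases eq_or_ne x 0 with rfl | hx₀
  · exact continuousAt_radialHessian_zero hψ'₀ hψ''₀
  have hs : ‖x‖ ^ 2 ∈ Ioo 0 a := ⟨by positivity, hx⟩
  have h₁ : ContinuousAt ψ' (‖x‖ ^ 2) := (hψ' _ hs).continuousAt
  have h₂ : ContinuousAt ψ'' (‖x‖ ^ 2) := hψ''.continuousAt (isOpen_Ioo.mem_nhds hs)
  have h₃ : ContinuousAt (fun y : E => ‖y‖ ^ 2) x := by fun_prop
  have h₄ := (continuous_innerBilin_smulRight (E := E)).continuousAt (x := x)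
  exact (((h₁.comp (f := fun y : E => ‖y‖ ^ 2) h₃).const_mul 2).smul continuousAt_const).add
    (((h₂.comp (f := fun y : E => ‖y‖ ^ 2) h₃).const_mul 4).smul h₄)

lemma contDiffOn_comp_norm_sq (hψ : ∀ s ∈ Ico 0 a, HasDerivWithinAt ψ (ψ' s) (Ici 0) s)
    (hψ' : ∀ s ∈ Ioo 0 a, HasDerivAt ψ' (ψ'' s) s) (hψ'' : ContinuousOn ψ'' (Ioo 0 a))
    (hψ'₀ : Tendsto ψ' (𝓝[>] 0) (𝓝 (ψ' 0)))
    (hψ''₀ : Tendsto (fun s => s * ψ'' s) (𝓝[>] 0) (𝓝 0)) :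
    ContDiffOn ℝ 2 (fun y : E => ψ (‖y‖ ^ 2)) {x : E | ‖x‖ ^ 2 < a} := by
  have hU : IsOpen {x : E | ‖x‖ ^ 2 < a} := isOpen_lt (by fun_prop) continuous_const
  refine contDiffOn_succ_of_hasFDerivAt (k := 1) hU (fun x hx => hasFDerivAt_comp_norm_sq hψ hx) ?_
  refine contDiffOn_succ_of_hasFDerivAt (k := 0) hU
    (fun x hx => hasFDerivAt_radialDeriv hψ' hψ'₀ hx) ?_
  exact contDiffOn_zero.2 (continuousOn_radialHessian hψ' hψ'' hψ'₀ hψ''₀)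

end Radial

namespace HeatBall

variable {E : Type*} [NormedAddCommGroup E] [InnerProductSpace ℝ E] {n : ℕ} {τ s : ℝ}

def radiusSq (n : ℕ) (τ : ℝ) : ℝ := -(2 * n) * τ * log (4 * π * τ)

def radiusSqDeriv (n : ℕ) (τ : ℝ) : ℝ := -(2 * n) * log (4 * π * exp 1 * τ)

def tMax : ℝ := (4 * π * exp 2)⁻¹

def depth (n : ℕ) : ℝ → ℝ := Function.invFunOn (radiusSq n) (Icc 0 tMax)

-- At `s = 0` this is `(radiusSqDeriv n 0)⁻¹ = (-(2 * n) * log 0)⁻¹ = 0`, the right derivative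
-- of `depth n` at `0`; hence `log (4 * π * exp 1 * τ)` rather than `log (4 * π * τ) + 1` above.
def depthDeriv (n : ℕ) (s : ℝ) : ℝ := (radiusSqDeriv n (depth n s))⁻¹

def depthDeriv2 (n : ℕ) (s : ℝ) : ℝ := 2 * n * depthDeriv n s ^ 3 / depth n s

lemma one_le_heatF_iff (hτ : 0 < τ) (x : EuclideanSpace ℝ (Fin n)) :
    1 ≤ heatF n x τ ↔ ‖x‖ ^ 2 ≤ radiusSq n τ := by
  rw [heatF, if_pos hτ, rpow_def_of_pos (by positivity), ← exp_add, one_le_exp_iff, radiusSq,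
    ← sub_nonneg (b := ‖x‖ ^ 2)]
  have h : -(2 * n) * τ * log (4 * π * τ) - ‖x‖ ^ 2 =
      4 * τ * (log (4 * π * τ) * (-(n : ℝ) / 2) + -‖x‖ ^ 2 / (4 * τ)) := by
    field_simp
    ring
  rw [h, mul_nonneg_iff_of_pos_left (by positivity)]

lemma mem_heatBall_one_iff {x : EuclideanSpace ℝ (Fin n)} {t : ℝ} (ht : t < 0) :
    (x, t) ∈ heatBall n (0, 0) 1 ↔ ‖x‖ ^ 2 ≤ radiusSq n (-t) := by
  show 1 ≤ heatF n (0 - x) (0 - t) ↔ _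
  rw [zero_sub, zero_sub, one_le_heatF_iff (neg_pos.2 ht), norm_neg]

lemma tMax_pos : 0 < tMax := by
  unfold tMax; positivity

lemma log_four_pi_tMax : log (4 * π * tMax) = -2 := by
  rw [tMax, ← div_eq_mul_inv, div_mul_cancel_left₀ (by positivity), log_inv, log_exp]

lemma radiusSq_zero : radiusSq n 0 = 0 := by
  simp [radiusSq]

lemma radiusSq_tMax : radiusSq n tMax = 4 * n * tMax := by
  rw [radiusSq, log_four_pi_tMax]; ring

lemma radiusSq_eq_mul (n : ℕ) (τ : ℝ) : radiusSq n τ = τ * (radiusSqDeriv n τ + 2 * n) := by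
  rcases eq_or_ne τ 0 with rfl | hτ
  · simp [radiusSq]
  · rw [radiusSq, radiusSqDeriv, mul_right_comm _ (exp 1), log_mul (by positivity) (exp_ne_zero 1),
      log_exp]
    ring

lemma continuous_radiusSq : Continuous (radiusSq n) := by
  have h : radiusSq n = fun τ => -(2 * n) / (4 * π) * ((4 * π * τ) * log (4 * π * τ)) := by
    ext τ
    rw [radiusSq]
    field_simp
  rw [h]
  exact continuous_const.mul (continuous_mul_log.comp (continuous_const.mul continuous_id))

lemma hasDerivAt_radiusSq (hτ : τ ≠ 0) : HasDerivAt (radiusSq n) (radiusSqDeriv n τ) τ := by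
  have h := ((hasDerivAt_id' τ).const_mul (-(2 * n : ℝ))).mul
    (((hasDerivAt_id' τ).const_mul (4 * π)).log (by simp [hτ, pi_ne_zero]))
  refine h.congr_deriv ?_
  rw [radiusSqDeriv, show 4 * π * exp 1 * τ = 4 * π * τ * exp 1 by ring,
    log_mul (by simp [hτ, pi_ne_zero]) (exp_ne_zero 1), log_exp]
  field_simp
  ring

lemma hasDerivAt_radiusSqDeriv (hτ : τ ≠ 0) :
    HasDerivAt (radiusSqDeriv n) (-(2 * n) / τ) τ := by
  have h := (((hasDerivAt_id' τ).const_mul (4 * π * exp 1)).log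
    (by simp [hτ, pi_ne_zero, exp_ne_zero])).const_mul (-(2 * n : ℝ))
  refine h.congr_deriv ?_
  field_simp

lemma le_radiusSqDeriv (hτ : τ ∈ Ioc 0 tMax) : 2 * n ≤ radiusSqDeriv n τ := by
  have : log (4 * π * exp 1 * τ) ≤ -1 := by
    calc log (4 * π * exp 1 * τ) ≤ log (4 * π * exp 1 * tMax) :=
          log_le_log (by have := hτ.1; positivity) (by gcongr; exact hτ.2)
      _ = -1 := by
          rw [mul_right_comm, log_mul (by have := tMax_pos; positivity) (exp_ne_zero 1),
            log_four_pi_tMax, log_exp]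
          norm_num
  rw [radiusSqDeriv]
  nlinarith [(Nat.cast_nonneg n : (0 : ℝ) ≤ n)]

lemma radiusSqDeriv_pos (hn : 0 < n) (hτ : τ ∈ Ioc 0 tMax) : 0 < radiusSqDeriv n τ :=
  lt_of_lt_of_le (by positivity) (le_radiusSqDeriv hτ)

lemma strictMonoOn_radiusSq (hn : 0 < n) : StrictMonoOn (radiusSq n) (Icc 0 tMax) := by
  refine strictMonoOn_of_deriv_pos (convex_Icc 0 tMax) continuous_radiusSq.continuousOn ?_
  intro τ hτ
  rw [interior_Icc] at hτ
  rw [(hasDerivAt_radiusSq hτ.1.ne').deriv]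
  exact radiusSqDeriv_pos hn (Ioo_subset_Ioc_self hτ)

lemma bijOn_radiusSq (hn : 0 < n) :
    BijOn (radiusSq n) (Icc 0 tMax) (Icc 0 (radiusSq n tMax)) := by
  have hmono := strictMonoOn_radiusSq hn
  have h0 : (0 : ℝ) ∈ Icc 0 tMax := ⟨le_rfl, tMax_pos.le⟩
  have h1 : tMax ∈ Icc 0 tMax := ⟨tMax_pos.le, le_rfl⟩
  refine ⟨fun τ hτ => ?_, hmono.injOn, ?_⟩
  · rw [← radiusSq_zero (n := n)]
    exact ⟨hmono.monotoneOn h0 hτ hτ.1, hmono.monotoneOn hτ h1 hτ.2⟩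
  · have := intermediate_value_Icc tMax_pos.le (continuous_radiusSq (n := n)).continuousOn
    rwa [radiusSq_zero] at this

lemma bijOn_depth (hn : 0 < n) :
    BijOn (depth n) (Icc 0 (radiusSq n tMax)) (Icc 0 tMax) :=
  (bijOn_radiusSq hn).symm ((bijOn_radiusSq hn).invOn_invFunOn).symm

lemma mapsTo_depth (hn : 0 < n) : MapsTo (depth n) (Icc 0 (radiusSq n tMax)) (Icc 0 tMax) :=
  (bijOn_depth hn).mapsTo

lemma radiusSq_depth (hn : 0 < n) (hs : s ∈ Icc 0 (radiusSq n tMax)) :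
    radiusSq n (depth n s) = s :=
  (bijOn_radiusSq hn).surjOn.rightInvOn_invFunOn hs

lemma depth_radiusSq (hn : 0 < n) (hτ : τ ∈ Icc 0 tMax) : depth n (radiusSq n τ) = τ :=
  (bijOn_radiusSq hn).injOn.leftInvOn_invFunOn hτ

lemma depth_zero (hn : 0 < n) : depth n 0 = 0 := by
  simpa [radiusSq_zero] using depth_radiusSq hn ⟨le_rfl, tMax_pos.le⟩

lemma depth_le_iff (hn : 0 < n) (hs : s ∈ Icc 0 (radiusSq n tMax)) (hτ : τ ∈ Icc 0 tMax) :
    depth n s ≤ τ ↔ s ≤ radiusSq n τ := by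
  conv_rhs => rw [← radiusSq_depth hn hs]
  exact ((strictMonoOn_radiusSq hn).le_iff_le (mapsTo_depth hn hs) hτ).symm

lemma monotoneOn_depth (hn : 0 < n) : MonotoneOn (depth n) (Icc 0 (radiusSq n tMax)) :=
  fun _ hs _ hs' hss' =>
    (depth_le_iff hn hs (mapsTo_depth hn hs')).2 (by rwa [radiusSq_depth hn hs'])

lemma depth_mem_Ioo (hn : 0 < n) (hs : s ∈ Ioo 0 (radiusSq n tMax)) : depth n s ∈ Ioo 0 tMax := by
  have hs' : s ∈ Icc 0 (radiusSq n tMax) := Ioo_subset_Icc_self hs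
  have hmono := strictMonoOn_radiusSq hn
  have h0 : (0 : ℝ) ∈ Icc 0 tMax := ⟨le_rfl, tMax_pos.le⟩
  have h1 : tMax ∈ Icc 0 tMax := ⟨tMax_pos.le, le_rfl⟩
  constructor
  · rw [← hmono.lt_iff_lt h0 (mapsTo_depth hn hs'), radiusSq_depth hn hs', radiusSq_zero]
    exact hs.1
  · rw [← hmono.lt_iff_lt (mapsTo_depth hn hs') h1, radiusSq_depth hn hs']
    exact hs.2

lemma radiusSq_tMax_pos (hn : 0 < n) : 0 < radiusSq n tMax := by
  rw [radiusSq_tMax]; have := tMax_pos; positivity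

lemma continuousAt_depth (hn : 0 < n) (hs : s ∈ Ioo 0 (radiusSq n tMax)) :
    ContinuousAt (depth n) s := by
  refine continuousAt_of_monotoneOn_of_image_mem_nhds (monotoneOn_depth hn)
    (Icc_mem_nhds hs.1 hs.2) ?_
  rw [(bijOn_depth hn).image_eq]
  exact Icc_mem_nhds (depth_mem_Ioo hn hs).1 (depth_mem_Ioo hn hs).2

lemma continuousWithinAt_depth_zero (hn : 0 < n) : ContinuousWithinAt (depth n) (Ici 0) 0 := by
  refine continuousWithinAt_right_of_monotoneOn_of_image_mem_nhdsWithin (monotoneOn_depth hn)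
    (Icc_mem_nhdsGE (radiusSq_tMax_pos hn)) ?_
  rw [(bijOn_depth hn).image_eq, depth_zero hn]
  exact Icc_mem_nhdsGE tMax_pos

lemma tendsto_depth_nhdsGT_zero (hn : 0 < n) : Tendsto (depth n) (𝓝[>] 0) (𝓝[>] 0) := by
  refine tendsto_nhdsWithin_iff.2 ⟨?_, ?_⟩
  · simpa [depth_zero hn] using
      ((continuousWithinAt_depth_zero hn).mono Ioi_subset_Ici_self).tendsto
  · filter_upwards [Ioo_mem_nhdsGT (radiusSq_tMax_pos hn)] with s hs
    exact (depth_mem_Ioo hn hs).1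

lemma hasDerivAt_depth (hn : 0 < n) (hs : s ∈ Ioo 0 (radiusSq n tMax)) :
    HasDerivAt (depth n) (depthDeriv n s) s := by
  have hτ := depth_mem_Ioo hn hs
  refine HasDerivAt.of_local_left_inverse (continuousAt_depth hn hs)
    (hasDerivAt_radiusSq hτ.1.ne') (radiusSqDeriv_pos hn (Ioo_subset_Ioc_self hτ)).ne' ?_
  filter_upwards [Ioo_mem_nhds hs.1 hs.2] with s' hs'
  exact radiusSq_depth hn (Ioo_subset_Icc_self hs')

lemma hasDerivAt_depthDeriv (hn : 0 < n) (hs : s ∈ Ioo 0 (radiusSq n tMax)) :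
    HasDerivAt (depthDeriv n) (depthDeriv2 n s) s := by
  have hτ := depth_mem_Ioo hn hs
  have h := ((hasDerivAt_radiusSqDeriv hτ.1.ne').comp s (hasDerivAt_depth hn hs)).inv
    (radiusSqDeriv_pos hn (Ioo_subset_Ioc_self hτ)).ne'
  refine h.congr_deriv ?_
  simp only [depthDeriv2, depthDeriv, Function.comp]
  field_simp

lemma continuousOn_depthDeriv2 (hn : 0 < n) :
    ContinuousOn (depthDeriv2 n) (Ioo 0 (radiusSq n tMax)) := fun _ hs =>
  (((continuous_const.continuousAt.mul ((hasDerivAt_depthDeriv hn hs).continuousAt.pow 3)).div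
    (continuousAt_depth hn hs) (depth_mem_Ioo hn hs).1.ne')).continuousWithinAt

lemma tendsto_radiusSqDeriv_atTop (hn : 0 < n) : Tendsto (radiusSqDeriv n) (𝓝[>] 0) atTop := by
  have h : Tendsto (fun τ : ℝ => 4 * π * exp 1 * τ) (𝓝[>] 0) (𝓝[>] 0) := by
    refine tendsto_nhdsWithin_iff.2 ⟨?_, ?_⟩
    · exact ((continuous_const_mul _).tendsto' 0 0 (mul_zero _)).mono_left nhdsWithin_le_nhds
    · filter_upwards [self_mem_nhdsWithin] with τ hτ
      exact mul_pos (by positivity) (show (0 : ℝ) < τ from hτ)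
  exact (tendsto_log_nhdsGT_zero.comp h).const_mul_atBot_of_neg (by simp [hn])

lemma tendsto_depthDeriv_nhdsGT_zero (hn : 0 < n) : Tendsto (depthDeriv n) (𝓝[>] 0) (𝓝 0) :=
  tendsto_inv_atTop_zero.comp ((tendsto_radiusSqDeriv_atTop hn).comp (tendsto_depth_nhdsGT_zero hn))

lemma depthDeriv_zero (hn : 0 < n) : depthDeriv n 0 = 0 := by
  simp [depthDeriv, depth_zero hn, radiusSqDeriv]

lemma mul_depthDeriv2 (hn : 0 < n) (hs : s ∈ Ioo 0 (radiusSq n tMax)) :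
    s * depthDeriv2 n s = 2 * n * depthDeriv n s ^ 2 + (2 * n) ^ 2 * depthDeriv n s ^ 3 := by
  have hτ := depth_mem_Ioo hn hs
  have hd := (radiusSqDeriv_pos hn (Ioo_subset_Ioc_self hτ)).ne'
  have h0 := hτ.1.ne'
  have hs' : s = depth n s * (radiusSqDeriv n (depth n s) + 2 * n) := by
    rw [← radiusSq_eq_mul, radiusSq_depth hn (Ioo_subset_Icc_self hs)]
  simp only [depthDeriv2, depthDeriv]
  nth_rw 1 [hs']
  field_simp

lemma tendsto_mul_depthDeriv2 (hn : 0 < n) :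
    Tendsto (fun s => s * depthDeriv2 n s) (𝓝[>] 0) (𝓝 0) := by
  have h := (((tendsto_depthDeriv_nhdsGT_zero hn).pow 2).const_mul (2 * n : ℝ)).add
    (((tendsto_depthDeriv_nhdsGT_zero hn).pow 3).const_mul ((2 * n : ℝ) ^ 2))
  simp only [ne_eq, OfNat.ofNat_ne_zero, not_false_eq_true, zero_pow, mul_zero, add_zero] at h
  refine h.congr' ?_
  filter_upwards [Ioo_mem_nhdsGT (radiusSq_tMax_pos hn)] with s hs
  exact (mul_depthDeriv2 hn hs).symm

lemma hasDerivWithinAt_depth (hn : 0 < n) (hs : s ∈ Ico 0 (radiusSq n tMax)) :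
    HasDerivWithinAt (depth n) (depthDeriv n s) (Ici 0) s := by
  rcases hs.1.eq_or_lt with rfl | hs₀
  · rw [depthDeriv_zero hn]
    refine hasDerivWithinAt_Ici_of_tendsto_deriv (s := Ioo 0 (radiusSq n tMax))
      (fun s hs => (hasDerivAt_depth hn hs).differentiableAt.differentiableWithinAt)
      ((continuousWithinAt_depth_zero hn).mono fun s hs => le_of_lt hs.1)
      (Ioo_mem_nhdsGT (radiusSq_tMax_pos hn)) ?_
    refine (tendsto_depthDeriv_nhdsGT_zero hn).congr' ?_
    filter_upwards [Ioo_mem_nhdsGT (radiusSq_tMax_pos hn)] with s hs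
    exact (hasDerivAt_depth hn hs).deriv.symm
  · exact (hasDerivAt_depth hn ⟨hs₀, hs.2⟩).hasDerivWithinAt

lemma tMax_le_radiusSq_tMax (hn : 0 < n) : tMax ≤ radiusSq n tMax := by
  rw [radiusSq_tMax]
  have : (1 : ℝ) ≤ n := Nat.one_le_cast.2 hn
  nlinarith [tMax_pos]

lemma ball_sqrt_tMax_subset {V : Type*} [SeminormedAddCommGroup V] (hn : 0 < n) :
    ball (0 : V) √tMax ⊆ {x | ‖x‖ ^ 2 < radiusSq n tMax} := fun x hx => by
  rw [mem_ball_zero_iff, lt_sqrt (norm_nonneg x)] at hx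
  exact hx.trans_le (tMax_le_radiusSq_tMax hn)

lemma mem_heatBall_one_iff_le_neg_depth (hn : 0 < n) {x : EuclideanSpace ℝ (Fin n)} {t : ℝ}
    (hx : ‖x‖ ^ 2 ≤ radiusSq n tMax) (ht : t ∈ Ico (-tMax) 0) :
    (x, t) ∈ heatBall n (0, 0) 1 ↔ t ≤ -depth n (‖x‖ ^ 2) := by
  rw [mem_heatBall_one_iff ht.2, ← depth_le_iff hn ⟨sq_nonneg _, hx⟩
    ⟨by linarith [ht.2], by linarith [ht.1]⟩, le_neg]

lemma contDiffOn_depth_norm_sq (hn : 0 < n) :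
    ContDiffOn ℝ 2 (fun x : E => depth n (‖x‖ ^ 2)) {x | ‖x‖ ^ 2 < radiusSq n tMax} :=
  contDiffOn_comp_norm_sq (fun _ hs => hasDerivWithinAt_depth hn hs)
    (fun _ hs => hasDerivAt_depthDeriv hn hs) (continuousOn_depthDeriv2 hn)
    (by rw [depthDeriv_zero hn]; exact tendsto_depthDeriv_nhdsGT_zero hn)
    (tendsto_mul_depthDeriv2 hn)

lemma hasFDerivAt_depth_norm_sq (hn : 0 < n) {x : E} (hx : ‖x‖ ^ 2 < radiusSq n tMax) :
    HasFDerivAt (fun x : E => depth n (‖x‖ ^ 2)) (radialDeriv (depthDeriv n) x) x :=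
  hasFDerivAt_comp_norm_sq (fun _ hs => hasDerivWithinAt_depth hn hs) hx

lemma hasFDerivAt_radialDeriv_depthDeriv_zero (hn : 0 < n) :
    HasFDerivAt (radialDeriv (E := E) (depthDeriv n)) (0 : E →L[ℝ] E →L[ℝ] ℝ) 0 := by
  rw [← radialHessian_zero_eq_zero (ψ'' := depthDeriv2 n) (depthDeriv_zero hn)]
  exact hasFDerivAt_radialDeriv (fun _ hs => hasDerivAt_depthDeriv hn hs)
    (by rw [depthDeriv_zero hn]; exact tendsto_depthDeriv_nhdsGT_zero hn)
    (by simpa using radiusSq_tMax_pos hn)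

end HeatBall

/-- near the origin, the boundary of `E(1)` is the graph of a `C²`
function whose value, gradient and Hessian vanish at `0`. -/
theorem heatBall_boundary_graph (n : ℕ) (hn : 1 ≤ n) :
    ∃ ε > (0 : ℝ), ∃ Φ : EuclideanSpace ℝ (Fin n) → ℝ,
      ContDiffOn ℝ 2 Φ (Metric.ball (0 : EuclideanSpace ℝ (Fin n)) ε) ∧
      Φ 0 = 0 ∧
      iteratedFDerivWithin ℝ 1 Φ (Metric.ball (0 : EuclideanSpace ℝ (Fin n)) ε) 0 = 0 ∧
      iteratedFDerivWithin ℝ 2 Φ (Metric.ball (0 : EuclideanSpace ℝ (Fin n)) ε) 0 = 0 ∧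
      (∀ x ∈ Metric.ball (0 : EuclideanSpace ℝ (Fin n)) ε, Φ x ≤ 0) ∧
      ∀ (x : EuclideanSpace ℝ (Fin n)) (t : ℝ), ‖x‖ < ε → -ε ^ 2 < t → t < 0 →
        ((x, t) ∈ heatBall n ((0 : EuclideanSpace ℝ (Fin n)), (0 : ℝ)) 1 ↔ t ≤ Φ x) := by
  have hε : 0 < √HeatBall.tMax := sqrt_pos.2 HeatBall.tMax_pos
  have hU := HeatBall.ball_sqrt_tMax_subset (V := EuclideanSpace ℝ (Fin n)) hn
  have h₀ : (0 : EuclideanSpace ℝ (Fin n)) ∈ ball 0 √HeatBall.tMax := mem_ball_self hε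
  refine ⟨√HeatBall.tMax, hε, fun x => -HeatBall.depth n (‖x‖ ^ 2),
    (HeatBall.contDiffOn_depth_norm_sq hn).neg.mono hU, by simp [HeatBall.depth_zero hn], ?_, ?_,
    fun x hx => neg_nonpos.2 (HeatBall.mapsTo_depth hn ⟨sq_nonneg _, (hU hx).le⟩).1,
    fun x t hx ht₁ ht₂ => ?_⟩
  · exact iteratedFDerivWithin_one_eq_zero isOpen_ball h₀
      (by simpa [radialDeriv] using (HeatBall.hasFDerivAt_depth_norm_sq hn (hU h₀)).fun_neg)
  · exact iteratedFDerivWithin_two_eq_zero isOpen_ball h₀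
      (fun x hx => (HeatBall.hasFDerivAt_depth_norm_sq hn (hU hx)).fun_neg)
      (by simpa using (HeatBall.hasFDerivAt_radialDeriv_depthDeriv_zero hn).fun_neg)
  · rw [sq_sqrt HeatBall.tMax_pos.le] at ht₁
    exact HeatBall.mem_heatBall_one_iff_le_neg_depth hn (hU (mem_ball_zero_iff.2 hx)).le
      ⟨ht₁.le, ht₂⟩
end
end

section
/- Let n ≥ 1. For every θ₀ > 0 there exists θ ∈ (0,1), depending only on n and θ₀, such that for every r > 0: |C_{θ r^{−1/n}}((0,0)) \ E(r)| ≤ (θ₀/4) · |C_{θ r^{−1/n}}|, where C_ρ((0,0)) = B_ρ(0) × (−ρ², 0). -/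
/-!
The parabolic dilation `(x, t) ↦ (ρ x, ρ² t)` multiplies volumes by `ρ ^ (n + 2)`, maps
`C_1` onto `C_ρ` and `E(a)` onto `E(a / ρ ^ n)`. With `ρ = θ r ^ (-1/n)` the ratio
`|C_ρ \ E(r)| / |C_ρ|` therefore equals `|C_1 \ E(θ ^ n)| / |C_1|`, independently of `r`.
Since `F > 0` on `C_1`, the sets `C_1 \ E(a)` decrease to the empty set as `a ↓ 0`, so this
ratio is small once `θ` is small.
-/

open MeasureTheory Real Set Metric Filter

noncomputable section

open Topology

lemma heatF_pos {n : ℕ} (x : EuclideanSpace ℝ (Fin n)) {t : ℝ} (ht : 0 < t) :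
    0 < heatF n x t := by
  rw [heatF, if_pos ht]
  positivity

lemma heatF_smul {n : ℕ} {ρ : ℝ} (hρ : 0 < ρ) (x : EuclideanSpace ℝ (Fin n)) (t : ℝ) :
    heatF n (ρ • x) (ρ ^ 2 * t) = (ρ ^ n)⁻¹ * heatF n x t := by
  have hρ2 : 0 < ρ ^ 2 := by positivity
  unfold heatF
  by_cases ht : 0 < t
  · have hpow :
        (4 * π * (ρ ^ 2 * t)) ^ (-(n : ℝ) / 2) = (ρ ^ n)⁻¹ * (4 * π * t) ^ (-(n : ℝ) / 2) := by
      rw [show 4 * π * (ρ ^ 2 * t) = ρ ^ 2 * (4 * π * t) by ring,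
        Real.mul_rpow hρ2.le (by positivity), ← Real.rpow_natCast ρ 2, ← Real.rpow_mul hρ.le,
        show ((2 : ℕ) : ℝ) * (-(n : ℝ) / 2) = -n by push_cast; ring, Real.rpow_neg hρ.le,
        Real.rpow_natCast]
    have hexp : -‖ρ • x‖ ^ 2 / (4 * (ρ ^ 2 * t)) = -‖x‖ ^ 2 / (4 * t) := by
      rw [norm_smul, Real.norm_eq_abs, mul_pow, sq_abs]
      field_simp
    rw [if_pos (by positivity), if_pos ht, hpow, hexp, mul_assoc]
  · rw [if_neg ht, if_neg (by nlinarith), mul_zero]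

lemma measurable_heatF_sub (n : ℕ) (X : Spc n) :
    Measurable fun Y : Spc n => heatF n (X.1 - Y.1) (X.2 - Y.2) :=
  Measurable.ite (measurableSet_lt measurable_const (by fun_prop)) (by fun_prop) measurable_const

lemma measurableSet_heatBall (n : ℕ) (X : Spc n) (a : ℝ) : MeasurableSet (heatBall n X a) :=
  measurableSet_le measurable_const (measurable_heatF_sub n X)

lemma tendsto_volume_diff_heatBall {n : ℕ} (X : Spc n) {S : Set (Spc n)} (hS : MeasurableSet S)
    (hS_fin : volume S ≠ ⊤) (hS_past : ∀ Y ∈ S, Y.2 < X.2) :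
    Tendsto (fun a => volume (S \ heatBall n X a)) (𝓝[>] 0) (𝓝 0) := by
  have hempty : ⋂ a > (0 : ℝ), S \ heatBall n X a = ∅ := by
    refine eq_empty_of_forall_notMem fun Y hY => ?_
    have hF := heatF_pos (X.1 - Y.1) (sub_pos.2 (hS_past Y (mem_iInter₂.1 hY 1 one_pos).1))
    exact (mem_iInter₂.1 hY _ hF).2 (le_refl (heatF n (X.1 - Y.1) (X.2 - Y.2)))
  simpa [hempty, Function.comp_def] using tendsto_measure_biInter_gt (μ := volume) (a := (0 : ℝ))
    (fun a _ => (hS.diff (measurableSet_heatBall n X a)).nullMeasurableSet)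
    (fun a b _ hab => sdiff_subset_sdiff_right fun Y hY => hab.trans hY)
    ⟨1, one_pos, ne_top_of_le_ne_top hS_fin (measure_mono sdiff_subset)⟩

lemma cylVol_pos (n : ℕ) {r : ℝ} (hr : 0 < r) : 0 < cylVol n r := by
  rw [cylVol, pCyl, Measure.volume_eq_prod, Measure.prod_prod]
  exact ENNReal.mul_pos (measure_ball_pos _ _ hr).ne' (by simpa using hr.ne')

lemma cylVol_ne_top (n : ℕ) (r : ℝ) : cylVol n r ≠ ⊤ := by
  rw [cylVol, pCyl, Measure.volume_eq_prod, Measure.prod_prod]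
  exact ENNReal.mul_ne_top measure_ball_lt_top.ne (by simp)

lemma tendsto_pow_nhdsGT_zero {n : ℕ} (hn : n ≠ 0) :
    Tendsto (fun x : ℝ => x ^ n) (𝓝[>] 0) (𝓝[>] 0) :=
  tendsto_nhdsWithin_of_tendsto_nhds_of_eventually_within _
    (((continuous_pow n).tendsto' 0 0 (zero_pow hn)).mono_left nhdsWithin_le_nhds)
    (eventually_nhdsWithin_of_forall fun _ hx => mem_Ioi.2 (pow_pos hx n))

lemma exists_volume_pCyl_diff_heatBall_pow_le {n : ℕ} (hn : n ≠ 0) {ε : ENNReal}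
    (hε : 0 < ε) :
    ∃ θ ∈ Ioo (0 : ℝ) 1, volume (pCyl n 0 1 \ heatBall n 0 (θ ^ n)) ≤ ε := by
  have hlim := (tendsto_volume_diff_heatBall (0 : Spc n) (measurableSet_ball.prod measurableSet_Ioo)
    (cylVol_ne_top n 1) fun Y hY => hY.2.2).comp (tendsto_pow_nhdsGT_zero hn)
  obtain ⟨θ, hθ_small, hθ⟩ :=
    ((hlim.eventually (ge_mem_nhds hε)).and (Ioo_mem_nhdsGT one_pos)).exists
  exact ⟨θ, hθ, hθ_small⟩

def parabolicDilation (n : ℕ) (ρ : ℝ) : Spc n →ₗ[ℝ] Spc n :=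
  (ρ • LinearMap.id).prodMap ((ρ ^ 2) • LinearMap.id)

namespace parabolicDilation

variable {n : ℕ} {ρ : ℝ}

@[simp]
lemma apply (p : Spc n) : parabolicDilation n ρ p = (ρ • p.1, ρ ^ 2 * p.2) := rfl

lemma det : LinearMap.det (parabolicDilation n ρ) = ρ ^ (n + 2) := by
  simp [parabolicDilation, LinearMap.det_prodMap, LinearMap.det_smul, pow_add]

lemma surjective (hρ : ρ ≠ 0) : Function.Surjective (parabolicDilation n ρ) := fun p =>
  ⟨parabolicDilation n ρ⁻¹ p, by simp [smul_smul, hρ]⟩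

end parabolicDilation

lemma volume_eq_mul_volume_preimage_parabolicDilation {n : ℕ} {ρ : ℝ} (hρ : 0 < ρ)
    (S : Set (Spc n)) :
    volume S = ENNReal.ofReal (ρ ^ (n + 2)) * volume (parabolicDilation n ρ ⁻¹' S) := by
  conv_lhs => rw [← image_preimage_eq S (parabolicDilation.surjective hρ.ne'),
    Measure.volume_eq_prod, Measure.addHaar_image_linearMap, parabolicDilation.det,
    abs_of_pos (by positivity)]
  rw [Measure.volume_eq_prod]

lemma preimage_parabolicDilation_heatBall {n : ℕ} {ρ : ℝ} (hρ : 0 < ρ) (X : Spc n) (a : ℝ) :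
    parabolicDilation n ρ ⁻¹' heatBall n (parabolicDilation n ρ X) a =
      heatBall n X (ρ ^ n * a) := by
  ext Y
  simp only [mem_preimage, heatBall, mem_ofPred_eq, parabolicDilation.apply, ← smul_sub,
    ← mul_sub, heatF_smul hρ]
  exact le_inv_mul_iff₀ (by positivity)

lemma preimage_parabolicDilation_pCyl {n : ℕ} {ρ : ℝ} (hρ : 0 < ρ) (Y : Spc n) (r : ℝ) :
    parabolicDilation n ρ ⁻¹' pCyl n (parabolicDilation n ρ Y) (ρ * r) = pCyl n Y r := by
  ext X
  simp only [mem_preimage, pCyl, mem_prod, mem_ball, dist_eq_norm, mem_Ioo,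
    parabolicDilation.apply, ← smul_sub, norm_smul, Real.norm_eq_abs, abs_of_pos hρ,
    mul_lt_mul_iff_right₀ hρ]
  have hρ2 : 0 < ρ ^ 2 := by positivity
  rw [show ρ ^ 2 * Y.2 - (ρ * r) ^ 2 = ρ ^ 2 * (Y.2 - r ^ 2) by ring,
    mul_lt_mul_iff_right₀ hρ2, mul_lt_mul_iff_right₀ hρ2]

lemma preimage_parabolicDilation_pCyl_zero {n : ℕ} {ρ : ℝ} (hρ : 0 < ρ) :
    parabolicDilation n ρ ⁻¹' pCyl n 0 ρ = pCyl n 0 1 := by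
  simpa only [map_zero, mul_one] using preimage_parabolicDilation_pCyl hρ (0 : Spc n) 1

lemma cylVol_eq_mul_cylVol_one (n : ℕ) {ρ : ℝ} (hρ : 0 < ρ) :
    cylVol n ρ = ENNReal.ofReal (ρ ^ (n + 2)) * cylVol n 1 := by
  simp only [cylVol, Prod.mk_zero_zero]
  rw [volume_eq_mul_volume_preimage_parabolicDilation hρ, preimage_parabolicDilation_pCyl_zero hρ]

lemma volume_pCyl_diff_heatBall {n : ℕ} {ρ : ℝ} (hρ : 0 < ρ) (a : ℝ) :
    volume (pCyl n 0 ρ \ heatBall n 0 a) =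
      ENNReal.ofReal (ρ ^ (n + 2)) * volume (pCyl n 0 1 \ heatBall n 0 (ρ ^ n * a)) := by
  rw [volume_eq_mul_volume_preimage_parabolicDilation hρ, preimage_sdiff,
    preimage_parabolicDilation_pCyl_zero hρ, ← preimage_parabolicDilation_heatBall hρ, map_zero]

/-- small cylinders are almost contained in heat balls. -/
theorem cylinder_almost_in_heatBall (n : ℕ) (hn : 1 ≤ n) (θ₀ : ℝ) (hθ₀ : 0 < θ₀) :
    ∃ θ ∈ Set.Ioo (0 : ℝ) 1, ∀ r > (0 : ℝ),
      volume (pCyl n ((0 : EuclideanSpace ℝ (Fin n)), (0 : ℝ)) (θ * r ^ (-1 / (n : ℝ))) \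
          heatBall n ((0 : EuclideanSpace ℝ (Fin n)), (0 : ℝ)) r) ≤
        ENNReal.ofReal (θ₀ / 4) * cylVol n (θ * r ^ (-1 / (n : ℝ))) := by
  have hε : 0 < ENNReal.ofReal (θ₀ / 4) * cylVol n 1 :=
    ENNReal.mul_pos (ENNReal.ofReal_pos.2 (by positivity)).ne' (cylVol_pos n one_pos).ne'
  obtain ⟨θ, hθ, hsmall⟩ :=
    exists_volume_pCyl_diff_heatBall_pow_le (Nat.one_le_iff_ne_zero.1 hn) hε
  refine ⟨θ, hθ, fun r hr => ?_⟩
  set ρ := θ * r ^ (-1 / (n : ℝ))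
  have hρ : 0 < ρ := mul_pos hθ.1 (Real.rpow_pos_of_pos hr _)
  have hρr : ρ ^ n * r = θ ^ n := by
    rw [mul_pow, ← Real.rpow_natCast (r ^ _), ← Real.rpow_mul hr.le,
      div_mul_cancel₀ _ (by positivity), Real.rpow_neg_one, mul_assoc, inv_mul_cancel₀ hr.ne',
      mul_one]
  rw [Prod.mk_zero_zero, volume_pCyl_diff_heatBall hρ, hρr, cylVol_eq_mul_cylVol_one n hρ,
    mul_left_comm]
  exact mul_le_mul_right hsmall _

end
end

section
/- Let n ≥ 1 and let Q ⊆ ℝ^n × ℝ be an open set satisfying condition (A) with constant θ₀ ∈ (0,1). Then there exists θ₁ ∈ (0,1), depending only on n and θ₀, such that for every λ > 1 there exists a positive integer k₀, depending only on n, λ and θ₀, such that for every Y₀ ∈ ∂_p Q and every integer k ≥ 1: |{Y ∈ ℝ^n × ℝ : (λ^{k₀})^{k+1} ≥ F(Y₀ − Y) ≥ (λ^{k₀})^{k}} \ Q| ≥ θ₁ · |{Y ∈ ℝ^n × ℝ : (λ^{k₀})^{k+1} ≥ F(Y₀ − Y) ≥ (λ^{k₀})^{k}}|. (That is, condition (A)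 implies condition (B).) -/
open MeasureTheory Real Set Metric Filter

noncomputable section

/-! ### Auxiliary lemmas -/

lemma heatF_le_iff (n : ℕ) (hn : 1 ≤ n) (a : ℝ) (ha : 0 < a)
    (x : EuclideanSpace ℝ (Fin n)) (t : ℝ) (ht : 0 < t) :
    a ≤ heatF n x t ↔
      ‖x‖ ^ 2 ≤ 2 * (n:ℝ) * t * (Real.log ((4*π)⁻¹ * a ^ (-2/(n:ℝ))) - Real.log t) := by
  have hπ : (0:ℝ) < 4 * π := by positivity
  have hN : (0:ℝ) < (n:ℝ) := by exact_mod_cast Nat.lt_of_lt_of_le Nat.zero_lt_one hn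
  have hP : (0:ℝ) < (4*π*t) ^ (-(n:ℝ)/2) := Real.rpow_pos_of_pos (by positivity) _
  have h4t : (0:ℝ) < 4 * t := by linarith
  unfold heatF
  rw [if_pos ht, ← Real.log_le_log_iff ha (by positivity),
    Real.log_mul (ne_of_gt hP) (Real.exp_ne_zero _), Real.log_exp,
    Real.log_rpow (by positivity)]
  have hta : Real.log ((4*π)⁻¹ * a ^ (-2/(n:ℝ)))
      = -Real.log (4*π) + (-2/(n:ℝ)) * Real.log a := by
    rw [Real.log_mul (by positivity) (ne_of_gt (Real.rpow_pos_of_pos ha _)),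
      Real.log_inv, Real.log_rpow ha]
  rw [hta, Real.log_mul (ne_of_gt hπ) (ne_of_gt ht)]
  set A := Real.log a
  set B := Real.log (4*π)
  set L := Real.log t
  have hEq : (-(n:ℝ)/2 * (B + L) - A) * (4*t) = 2*(n:ℝ)*t*((-B + (-2/(n:ℝ))*A) - L) := by
    field_simp
    ring
  constructor
  · intro h
    have h' : ‖x‖^2/(4*t) ≤ -(n:ℝ)/2 * (B + L) - A := by
      have : -‖x‖^2/(4*t) = -(‖x‖^2/(4*t)) := by ring
      rw [this] at h; linarith
    have := (div_le_iff₀ h4t).mp h'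
    linarith [hEq]
  · intro h
    have h2 : ‖x‖^2 ≤ (-(n:ℝ)/2 * (B + L) - A) * (4*t) := by linarith [hEq]
    have h' := (div_le_iff₀ h4t).mpr h2
    have : -‖x‖^2/(4*t) = -(‖x‖^2/(4*t)) := by ring
    rw [this]; linarith

lemma ta_pos (a : ℝ) (ha : 0 < a) (n : ℕ) : 0 < (4*π)⁻¹ * a ^ (-2/(n:ℝ)) := by
  have : (0:ℝ) < π := Real.pi_pos
  positivity

lemma heatF_pos_t (n : ℕ) (a : ℝ) (ha : 0 < a) (x : EuclideanSpace ℝ (Fin n)) (t : ℝ)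
    (h : a ≤ heatF n x t) : 0 < t := by
  by_contra hc
  rw [heatF, if_neg hc] at h; linarith

lemma heatF_box (n : ℕ) (hn : 1 ≤ n) (a : ℝ) (ha : 0 < a)
    (x : EuclideanSpace ℝ (Fin n)) (t : ℝ) (h : a ≤ heatF n x t) :
    0 < t ∧ t ≤ (4*π)⁻¹ * a ^ (-2/(n:ℝ)) ∧ ‖x‖^2 < 2*(n:ℝ)*((4*π)⁻¹ * a ^ (-2/(n:ℝ))) := by
  have ht : 0 < t := heatF_pos_t n a ha x t h
  set ta := (4*π)⁻¹ * a ^ (-2/(n:ℝ)) with hta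
  have hta0 : 0 < ta := ta_pos a ha n
  have hN : (0:ℝ) < (n:ℝ) := by exact_mod_cast Nat.lt_of_lt_of_le Nat.zero_lt_one hn
  have key := (heatF_le_iff n hn a ha x t ht).mp h
  rw [← hta] at key
  have hx0 : (0:ℝ) ≤ ‖x‖^2 := sq_nonneg _
  have h2nt : (0:ℝ) < 2*(n:ℝ)*t := by positivity
  have hlog : Real.log t ≤ Real.log ta := by
    by_contra hgt
    have := mul_neg_of_pos_of_neg h2nt (by linarith : Real.log ta - Real.log t < 0)
    linarith
  have hle : t ≤ ta := by
    have := Real.exp_le_exp.mpr hlog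
    rwa [Real.exp_log ht, Real.exp_log hta0] at this
  refine ⟨ht, hle, ?_⟩
  have hsub : Real.log ta - Real.log t = Real.log (ta / t) :=
    (Real.log_div (ne_of_gt hta0) (ne_of_gt ht)).symm
  have hbound : Real.log (ta / t) ≤ ta / t - 1 :=
    Real.log_le_sub_one_of_pos (by positivity)
  have htdiv : t * (ta / t) = ta := by field_simp
  have h1 : t * Real.log (ta / t) ≤ ta - t := by nlinarith
  rw [hsub] at key
  have h2 := mul_le_mul_of_nonneg_left h1 (by linarith : (0:ℝ) ≤ 2*(n:ℝ))
  nlinarith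

lemma slab_in (n : ℕ) (hn : 1 ≤ n) (θ₀ : ℝ) (hθ : 0 < θ₀) (a : ℝ) (ha : 0 < a)
    (x : EuclideanSpace ℝ (Fin n)) (t : ℝ)
    (ht1 : θ₀/4 * (Real.exp (-(1+2/((n:ℝ)*θ₀))) * ((4*π)⁻¹ * a ^ (-2/(n:ℝ)))) ≤ t)
    (ht2 : t ≤ Real.exp (-(1+2/((n:ℝ)*θ₀))) * ((4*π)⁻¹ * a ^ (-2/(n:ℝ))))
    (hx : ‖x‖^2 < Real.exp (-(1+2/((n:ℝ)*θ₀))) * ((4*π)⁻¹ * a ^ (-2/(n:ℝ)))) :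
    a ≤ heatF n x t := by
  set N := (n:ℝ) with hNdef
  have hN : (1:ℝ) ≤ N := by rw [hNdef]; exact_mod_cast hn
  set ta := (4*π)⁻¹ * a ^ (-2/N) with htadef
  have hta0 : 0 < ta := ta_pos a ha n
  set ε := Real.exp (-(1+2/(N*θ₀))) with hεdef
  have hε0 : 0 < ε := Real.exp_pos _
  have ht0 : 0 < t := lt_of_lt_of_le (by positivity) ht1
  rw [heatF_le_iff n hn a ha x t ht0]
  set K := 1 + 2/(N*θ₀) with hKdef
  have hK0 : 0 < K := by positivity
  have hlogε : Real.log ε = -K := Real.log_exp _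
  have hL : K ≤ Real.log ta - Real.log t := by
    have h1 : Real.log t ≤ Real.log (ε * ta) :=
      Real.log_le_log ht0 ht2
    rw [Real.log_mul (ne_of_gt hε0) (ne_of_gt hta0), hlogε] at h1
    linarith
  have hmul : 2*N*(θ₀/4*(ε*ta))*K ≤ 2*N*t*(Real.log ta - Real.log t) := by
    apply mul_le_mul _ hL (le_of_lt hK0) (by positivity)
    have : (0:ℝ) < 2*N := by linarith
    nlinarith [ht1]
  have hval : 2*N*(θ₀/4*(ε*ta))*K = ε*ta*(N*θ₀/2+1) := by
    rw [hKdef]; field_simp; ring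
  have hNθ : 0 ≤ N*θ₀/2 := by positivity
  have hfin : ε*ta ≤ ε*ta*(N*θ₀/2+1) := by nlinarith [mul_pos hε0 hta0]
  linarith

set_option maxHeartbeats 2000000 in
lemma aux_div (S e P A θ₀ : ℝ) (hP : 0 ≤ P) (hA : 0 < A)
    (hkey : S * 4 ≤ A * (θ₀ * e)) :
    S * P * A⁻¹ ≤ θ₀/4 * (e * P) := by
  rw [← div_eq_mul_inv, div_le_iff₀ hA]
  nlinarith [mul_le_mul_of_nonneg_right hkey hP]

/-- condition (A) implies condition (B). -/
theorem condA_implies_condB (n : ℕ) (hn : 1 ≤ n) (Q : Set (Spc n)) (hQ : IsOpen Q)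
    (θ₀ : ℝ) (hθ₀ : θ₀ ∈ Set.Ioo (0 : ℝ) 1) (hA : condA n Q θ₀) :
    ∃ θ₁ ∈ Set.Ioo (0 : ℝ) 1, ∀ lam : ℝ, 1 < lam → ∃ k₀ : ℕ, 0 < k₀ ∧
      ∀ Y₀ ∈ pBoundary n Q, ∀ k : ℕ, 1 ≤ k →
        ENNReal.ofReal θ₁ *
            volume (heatShell n Y₀ ((lam ^ k₀) ^ k) ((lam ^ k₀) ^ (k + 1))) ≤
          volume (heatShell n Y₀ ((lam ^ k₀) ^ k) ((lam ^ k₀) ^ (k + 1)) \ Q) := by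
  obtain ⟨hθ0, hθlt1⟩ := hθ₀
  haveI : Nontrivial (EuclideanSpace ℝ (Fin n)) := by
    apply Module.nontrivial_of_finrank_pos (R := ℝ)
    rw [finrank_euclideanSpace_fin]; omega
  have hN1 : (1:ℝ) ≤ (n:ℝ) := by exact_mod_cast hn
  have hN0 : (0:ℝ) < (n:ℝ) := by linarith
  set B1 : ENNReal := volume (ball (0 : EuclideanSpace ℝ (Fin n)) 1) with hB1def
  have hB1top : B1 ≠ ⊤ := measure_ball_lt_top.ne
  have hball : ∀ (y : EuclideanSpace ℝ (Fin n)) (R : ℝ), 0 ≤ R →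
      volume (ball y R) = ENNReal.ofReal (R ^ n) * B1 := by
    intro y R hR
    rw [hB1def, Measure.addHaar_ball volume y hR, finrank_euclideanSpace_fin]
  have hprod : ∀ (s : Set (EuclideanSpace ℝ (Fin n))) (t : Set ℝ),
      volume (s ×ˢ t) = volume s * volume t := by
    intro s t
    rw [Measure.volume_eq_prod _ _, Measure.prod_prod]
  -- constants
  set ε : ℝ := Real.exp (-(1+2/((n:ℝ)*θ₀))) with hεdef
  have hε0 : 0 < ε := Real.exp_pos _
  have hε1 : ε < 1 := by
    rw [hεdef, Real.exp_lt_one_iff]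
    have : 0 < 2/((n:ℝ)*θ₀) := by positivity
    linarith
  set sE : ℝ := Real.sqrt ε with hsEdef
  set s2N : ℝ := Real.sqrt (2*(n:ℝ)) with hs2Ndef
  have hsE0 : 0 < sE := Real.sqrt_pos.mpr hε0
  have hs2N1 : 1 ≤ s2N := by
    rw [hs2Ndef]
    rw [show (1:ℝ) = Real.sqrt 1 from (Real.sqrt_one).symm]
    exact Real.sqrt_le_sqrt (by linarith)
  have hs2N0 : 0 < s2N := lt_of_lt_of_le one_pos hs2N1
  have hs2Nn : (1:ℝ) ≤ s2N ^ n := one_le_pow₀ hs2N1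
  have hsEε1 : sE ^ n * ε ≤ 1 := by
    have h1 : sE ^ n ≤ 1 := pow_le_one₀ (le_of_lt hsE0) (Real.sqrt_le_one.mpr (le_of_lt hε1))
    nlinarith
  set θ₁ : ℝ := θ₀/2 * (sE ^ n * ε) / s2N ^ n with hθ₁def
  have hθ₁0 : 0 < θ₁ := by rw [hθ₁def]; positivity
  have hθ₁lt : θ₁ < 1 := by
    have h1 : θ₁ ≤ θ₀/2 * (sE ^ n * ε) := by
      rw [hθ₁def]
      apply div_le_self (by positivity) hs2Nn
    have h2 : θ₀/2 * (sE ^ n * ε) ≤ θ₀/2 := by nlinarith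
    linarith
  refine ⟨θ₁, ⟨hθ₁0, hθ₁lt⟩, ?_⟩
  intro lam hlam
  set M₀ : ℝ := s2N ^ n * 4 / (θ₀ * (sE ^ n * ε)) with hM₀def
  obtain ⟨k₁, hk₁⟩ := pow_unbounded_of_one_lt M₀ hlam
  refine ⟨k₁ + 1, Nat.succ_pos _, ?_⟩
  intro Y₀ hY₀ k hk
  set A : ℝ := lam ^ (k₁ + 1) with hAdef
  have hA1 : 1 < A := one_lt_pow₀ hlam (Nat.succ_ne_zero _)
  have hA0 : 0 < A := by linarith
  have hAM : M₀ ≤ A := by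
    calc M₀ ≤ lam ^ k₁ := le_of_lt hk₁
    _ ≤ lam ^ (k₁ + 1) := pow_le_pow_right₀ (le_of_lt hlam) (Nat.le_succ _)
  set a : ℝ := A ^ k with hadef
  set b : ℝ := A ^ (k + 1) with hbdef
  have ha0 : 0 < a := pow_pos hA0 _
  have hb0 : 0 < b := pow_pos hA0 _
  have hbA : b = a * A := pow_succ A k
  set ta : ℝ := (4*π)⁻¹ * a ^ (-2/(n:ℝ)) with htadef
  set tb : ℝ := (4*π)⁻¹ * b ^ (-2/(n:ℝ)) with htbdef
  have hta0 : 0 < ta := ta_pos a ha0 n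
  have htb0 : 0 < tb := ta_pos b hb0 n
  set c : ℝ := A ^ (-2/(n:ℝ)) with hcdef
  have hc0 : 0 < c := Real.rpow_pos_of_pos hA0 _
  have hc1 : c ≤ 1 :=
    Real.rpow_le_one_of_one_le_of_nonpos (le_of_lt hA1)
      (by rw [neg_div]; exact neg_nonpos.mpr (by positivity))
  have htb : tb = ta * c := by
    rw [htbdef, htadef, hcdef, hbA, Real.mul_rpow (le_of_lt ha0) (le_of_lt hA0)]
    ring
  set r : ℝ := Real.sqrt (ε * ta) with hrdef
  have hr0 : 0 < r := Real.sqrt_pos.mpr (by positivity)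
  have hr2 : r ^ 2 = ε * ta := Real.sq_sqrt (by positivity)
  set δ : ℝ := θ₀/4 with hδdef
  have hδ0 : 0 < δ := by rw [hδdef]; linarith
  -- sets
  set Sh := heatShell n Y₀ a b with hShdef
  set Ea := {p : Spc n | a ≤ heatF n (Y₀.1 - p.1) (Y₀.2 - p.2)} with hEadef
  set EbGt := {p : Spc n | b < heatF n (Y₀.1 - p.1) (Y₀.2 - p.2)} with hEbdef
  set Cyl := pCyl n Y₀ r with hCyldef
  -- slab inclusion
  have hslab : (ball Y₀.1 r ×ˢ Ioc (Y₀.2 - r^2) (Y₀.2 - δ*r^2)) ⊆ Ea := by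
    rintro ⟨py, ps⟩ ⟨hpy, hps⟩
    simp only [hEadef, mem_setOf_eq]
    apply slab_in n hn θ₀ hθ0 a ha0
    · -- lower bound on t
      have h1 : ps ≤ Y₀.2 - δ*r^2 := hps.2
      have : δ * r^2 ≤ Y₀.2 - ps := by linarith
      rw [hr2] at this
      exact le_trans (le_of_eq (by rw [hδdef])) this
    · have h1 : Y₀.2 - r^2 < ps := hps.1
      have : Y₀.2 - ps ≤ ε * ta := by rw [← hr2]; linarith
      exact this
    · have h1 : dist py Y₀.1 < r := mem_ball.mp hpy
      have h2 : ‖Y₀.1 - py‖ < r := by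
        rw [norm_sub_rev]
        rwa [dist_eq_norm] at h1
      calc ‖Y₀.1 - py‖^2 < r^2 := by
            rw [sq, sq]; exact mul_self_lt_mul_self (norm_nonneg _) h2
      _ = ε * ta := hr2
  -- inclusion (i1)
  have hi1 : Cyl \ Q ⊆ (Sh \ Q) ∪ ((Cyl \ Ea) ∪ EbGt) := by
    rintro p ⟨hpc, hpq⟩
    by_cases hpa : p ∈ Ea
    · by_cases hpb : b < heatF n (Y₀.1 - p.1) (Y₀.2 - p.2)
      · exact Or.inr (Or.inr hpb)
      · exact Or.inl ⟨⟨hpa, not_lt.mp hpb⟩, hpq⟩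
    · exact Or.inr (Or.inl ⟨hpc, hpa⟩)
  -- inclusion (i3)
  have hi3 : Cyl \ Ea ⊆ ball Y₀.1 r ×ˢ Ioo (Y₀.2 - δ*r^2) Y₀.2 := by
    rintro ⟨py, ps⟩ ⟨hpc, hpa⟩
    obtain ⟨hpy, hps⟩ := hpc
    refine ⟨hpy, ?_, hps.2⟩
    by_contra hle
    push_neg at hle
    exact hpa (hslab ⟨hpy, hps.1, hle⟩)
  -- inclusion (i4): box for Ea
  have hi4 : Ea ⊆ ball Y₀.1 (Real.sqrt (2*(n:ℝ)*ta)) ×ˢ Ico (Y₀.2 - ta) Y₀.2 := by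
    intro p hp
    obtain ⟨ht0', hle, hxlt⟩ := heatF_box n hn a ha0 _ _ hp
    rw [← htadef] at hle hxlt
    refine ⟨?_, ⟨by linarith, by linarith⟩⟩
    rw [mem_ball, dist_eq_norm, norm_sub_rev]
    exact (Real.lt_sqrt (norm_nonneg _)).mpr hxlt
  -- inclusion (i5): box for EbGt
  have hi5 : EbGt ⊆ ball Y₀.1 (Real.sqrt (2*(n:ℝ)*tb)) ×ˢ Ico (Y₀.2 - tb) Y₀.2 := by
    intro p hp
    have hp' : b ≤ heatF n (Y₀.1 - p.1) (Y₀.2 - p.2) := le_of_lt hp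
    obtain ⟨ht0', hle, hxlt⟩ := heatF_box n hn b hb0 _ _ hp'
    rw [← htbdef] at hle hxlt
    refine ⟨?_, ⟨by linarith, by linarith⟩⟩
    rw [mem_ball, dist_eq_norm, norm_sub_rev]
    exact (Real.lt_sqrt (norm_nonneg _)).mpr hxlt
  -- inclusion (i6)
  have hi6 : Sh ⊆ Ea := fun p hp => hp.1
  -- volume computations
  have hVC : cylVol n r = ENNReal.ofReal (r^n * r^2) * B1 := by
    rw [cylVol, pCyl, hprod, hball _ _ (le_of_lt hr0), Real.volume_Ioo]
    rw [show (0:ℝ) - (0 - r^2) = r^2 by ring]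
    rw [mul_right_comm, ← ENNReal.ofReal_mul (by positivity)]
  have hVslab : volume (ball Y₀.1 r ×ˢ Ioo (Y₀.2 - δ*r^2) Y₀.2)
      = ENNReal.ofReal (r^n * (δ*r^2)) * B1 := by
    rw [hprod, hball _ _ (le_of_lt hr0), Real.volume_Ioo]
    rw [show Y₀.2 - (Y₀.2 - δ*r^2) = δ*r^2 by ring]
    rw [mul_right_comm, ← ENNReal.ofReal_mul (by positivity)]
  have hVboxa : volume (ball Y₀.1 (Real.sqrt (2*(n:ℝ)*ta)) ×ˢ Ico (Y₀.2 - ta) Y₀.2)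
      = ENNReal.ofReal ((Real.sqrt (2*(n:ℝ)*ta))^n * ta) * B1 := by
    rw [hprod, hball _ _ (Real.sqrt_nonneg _), Real.volume_Ico]
    rw [show Y₀.2 - (Y₀.2 - ta) = ta by ring]
    rw [mul_right_comm, ← ENNReal.ofReal_mul (by positivity)]
  have hVboxb : volume (ball Y₀.1 (Real.sqrt (2*(n:ℝ)*tb)) ×ˢ Ico (Y₀.2 - tb) Y₀.2)
      = ENNReal.ofReal ((Real.sqrt (2*(n:ℝ)*tb))^n * tb) * B1 := by
    rw [hprod, hball _ _ (Real.sqrt_nonneg _), Real.volume_Ico]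
    rw [show Y₀.2 - (Y₀.2 - tb) = tb by ring]
    rw [mul_right_comm, ← ENNReal.ofReal_mul (by positivity)]
  -- real-number facts
  have hsqta : Real.sqrt (2*(n:ℝ)*ta) = s2N * Real.sqrt ta := by
    rw [hs2Ndef, ← Real.sqrt_mul (by positivity)]
  have hsqtb : Real.sqrt (2*(n:ℝ)*tb) = s2N * (Real.sqrt ta * Real.sqrt c) := by
    rw [htb, hs2Ndef, show 2*(n:ℝ)*(ta*c) = (2*(n:ℝ))*(ta*c) by ring,
      Real.sqrt_mul (by positivity), Real.sqrt_mul (le_of_lt hta0)]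
  have hrsplit : r = sE * Real.sqrt ta := by
    rw [hrdef, hsEdef, ← Real.sqrt_mul (le_of_lt hε0)]
  -- (√c)^n * c ≤ A⁻¹
  have hcpow : (Real.sqrt c)^n * c ≤ A⁻¹ := by
    have h1 : Real.sqrt c = c ^ ((1:ℝ)/2) := Real.sqrt_eq_rpow c
    have h2 : (Real.sqrt c)^n = c ^ ((1:ℝ)/2 * (n:ℝ)) := by
      rw [h1, ← Real.rpow_natCast (c ^ ((1:ℝ)/2)) n, ← Real.rpow_mul (le_of_lt hc0)]
    have h3 : c ^ ((1:ℝ)/2 * (n:ℝ)) = A⁻¹ := by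
      rw [hcdef, ← Real.rpow_mul (le_of_lt hA0)]
      rw [show -2/(n:ℝ) * ((1:ℝ)/2 * (n:ℝ)) = -1 by field_simp]
      exact Real.rpow_neg_one A
    rw [h2, h3]
    calc A⁻¹ * c ≤ A⁻¹ * 1 := by
          apply mul_le_mul_of_nonneg_left hc1 (by positivity)
    _ = A⁻¹ := mul_one _
  -- main real inequality for Eb bound
  have hM₀pos : 0 < θ₀ * (sE ^ n * ε) := by positivity
  have hkey : s2N ^ n * 4 ≤ A * (θ₀ * (sE ^ n * ε)) := by
    have := hAM
    rw [hM₀def] at this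
    exact (div_le_iff₀ hM₀pos).mp this
  have hP : (0:ℝ) < (Real.sqrt ta)^n * ta := by positivity
  have hEbReal : (Real.sqrt (2*(n:ℝ)*tb))^n * tb ≤ θ₀/4 * (r^n * r^2) := by
    rw [hsqtb, htb, hr2, hrsplit]
    have hexp : (s2N * (Real.sqrt ta * Real.sqrt c))^n * (ta * c)
        = (s2N^n * ((Real.sqrt ta)^n * ta)) * ((Real.sqrt c)^n * c) := by
      rw [mul_pow, mul_pow]; ring
    rw [hexp]
    have step1 : (s2N^n * ((Real.sqrt ta)^n * ta)) * ((Real.sqrt c)^n * c)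
        ≤ (s2N^n * ((Real.sqrt ta)^n * ta)) * A⁻¹ := by
      apply mul_le_mul_of_nonneg_left hcpow (by positivity)
    have step2 : (s2N^n * ((Real.sqrt ta)^n * ta)) * A⁻¹
        ≤ θ₀/4 * ((sE * Real.sqrt ta)^n * (ε * ta)) := by
      have := aux_div (s2N^n) (sE^n * ε) ((Real.sqrt ta)^n * ta) A θ₀ (le_of_lt hP) hA0 hkey
      calc (s2N^n * ((Real.sqrt ta)^n * ta)) * A⁻¹
          ≤ θ₀/4 * ((sE^n * ε) * ((Real.sqrt ta)^n * ta)) := this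
      _ = θ₀/4 * ((sE * Real.sqrt ta)^n * (ε * ta)) := by rw [mul_pow]; ring
    linarith
  -- the measure chain
  have hcond := hA Y₀ hY₀ r hr0
  rw [hVC] at hcond
  have hsub : volume (Cyl \ Q) ≤ volume (Sh \ Q) + (volume (Cyl \ Ea) + volume EbGt) := by
    calc volume (Cyl \ Q) ≤ volume ((Sh \ Q) ∪ ((Cyl \ Ea) ∪ EbGt)) := measure_mono hi1
    _ ≤ volume (Sh \ Q) + volume ((Cyl \ Ea) ∪ EbGt) := measure_union_le _ _
    _ ≤ volume (Sh \ Q) + (volume (Cyl \ Ea) + volume EbGt) :=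
        add_le_add le_rfl (measure_union_le _ _)
  have h3 : volume (Cyl \ Ea) ≤ ENNReal.ofReal (θ₀/4 * (r^n * r^2)) * B1 := by
    calc volume (Cyl \ Ea) ≤ volume (ball Y₀.1 r ×ˢ Ioo (Y₀.2 - δ*r^2) Y₀.2) :=
          measure_mono hi3
    _ = ENNReal.ofReal (r^n * (δ*r^2)) * B1 := hVslab
    _ = ENNReal.ofReal (θ₀/4 * (r^n * r^2)) * B1 := by
        rw [show r^n * (δ*r^2) = θ₀/4 * (r^n * r^2) by rw [hδdef]; ring]
  have h4 : volume EbGt ≤ ENNReal.ofReal (θ₀/4 * (r^n * r^2)) * B1 := by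
    calc volume EbGt ≤ volume (ball Y₀.1 (Real.sqrt (2*(n:ℝ)*tb)) ×ˢ Ico (Y₀.2 - tb) Y₀.2) :=
          measure_mono hi5
    _ = ENNReal.ofReal ((Real.sqrt (2*(n:ℝ)*tb))^n * tb) * B1 := hVboxb
    _ ≤ ENNReal.ofReal (θ₀/4 * (r^n * r^2)) * B1 := by
        apply mul_le_mul_left
        exact ENNReal.ofReal_le_ofReal hEbReal
  have hYne : ENNReal.ofReal (θ₀/2 * (r^n * r^2)) * B1 ≠ ⊤ :=
    ENNReal.mul_ne_top ENNReal.ofReal_ne_top hB1top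
  have hsplit : ENNReal.ofReal θ₀ * (ENNReal.ofReal (r^n * r^2) * B1)
      = ENNReal.ofReal (θ₀/2 * (r^n * r^2)) * B1
        + ENNReal.ofReal (θ₀/2 * (r^n * r^2)) * B1 := by
    rw [← add_mul, ← ENNReal.ofReal_add (by positivity) (by positivity), ← mul_assoc,
      ← ENNReal.ofReal_mul (by linarith)]
    congr 2
    ring
  have hcancel : ENNReal.ofReal (θ₀/2 * (r^n * r^2)) * B1 ≤ volume (Sh \ Q) := by
    have hchain : ENNReal.ofReal (θ₀/2 * (r^n * r^2)) * B1
        + ENNReal.ofReal (θ₀/2 * (r^n * r^2)) * B1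
        ≤ volume (Sh \ Q) + ENNReal.ofReal (θ₀/2 * (r^n * r^2)) * B1 := by
      rw [← hsplit]
      calc ENNReal.ofReal θ₀ * (ENNReal.ofReal (r^n * r^2) * B1)
          ≤ volume (Cyl \ Q) := le_of_lt hcond
      _ ≤ volume (Sh \ Q) + (volume (Cyl \ Ea) + volume EbGt) := hsub
      _ ≤ volume (Sh \ Q) + (ENNReal.ofReal (θ₀/4 * (r^n * r^2)) * B1
            + ENNReal.ofReal (θ₀/4 * (r^n * r^2)) * B1) :=
          add_le_add le_rfl (add_le_add h3 h4)
      _ = volume (Sh \ Q) + ENNReal.ofReal (θ₀/2 * (r^n * r^2)) * B1 := by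
          rw [← add_mul, ← ENNReal.ofReal_add (by positivity) (by positivity)]
          congr 3
          ring
    exact (ENNReal.add_le_add_iff_right hYne).mp hchain
  -- final comparison
  have hShbound : volume Sh ≤ ENNReal.ofReal ((Real.sqrt (2*(n:ℝ)*ta))^n * ta) * B1 := by
    calc volume Sh ≤ volume (ball Y₀.1 (Real.sqrt (2*(n:ℝ)*ta)) ×ˢ Ico (Y₀.2 - ta) Y₀.2) :=
          measure_mono (hi6.trans hi4)
    _ = _ := hVboxa
  have hθ₁eq : θ₁ * ((Real.sqrt (2*(n:ℝ)*ta))^n * ta) = θ₀/2 * (r^n * r^2) := by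
    rw [hsqta, hr2, hrsplit, hθ₁def, mul_pow, mul_pow]
    have hs2Nn0 : (s2N:ℝ)^n ≠ 0 := by positivity
    field_simp
  calc ENNReal.ofReal θ₁ * volume Sh
      ≤ ENNReal.ofReal θ₁ * (ENNReal.ofReal ((Real.sqrt (2*(n:ℝ)*ta))^n * ta) * B1) :=
        mul_le_mul_right hShbound _
  _ = ENNReal.ofReal (θ₁ * ((Real.sqrt (2*(n:ℝ)*ta))^n * ta)) * B1 := by
      rw [← mul_assoc, ← ENNReal.ofReal_mul (le_of_lt hθ₁0)]
  _ = ENNReal.ofReal (θ₀/2 * (r^n * r^2)) * B1 := by rw [hθ₁eq]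
  _ ≤ volume (Sh \ Q) := hcancel

end
end
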